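/- arXiv:1407.2766 — 9 statements merged into one kernel-verified Lean document; each statement's English description precedes it below -/
import Mathlib

section
/- Let M be a type equipped with a binary operation · and a distinguished element e, and suppose that ((e·(x·y))·(y·z))·z = x holds for all x, y, z ∈ M (formula 80R4↑). Then (M, ·) is a Boolean group with identity element e: the operation · is associative and commutative, e·x = x for all x, and x·x = e for all x. -/
theorem single_axiom_80R4up
    (M : Type) (mul : M → M → M) (e : M)
    (h : ∀ x y z : M, mul (mul (mul e (mul x y)) (mul y z)) z = x) :
    (∀ x y z : M, mul (mul x y) z = mul x (mul y z)) ∧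
    (∀ x y : M, mul x y = mul y x) ∧
    (∀ x : M, mul e x = x) ∧
    (∀ x : M, mul x x = e) := by
  have mcL : ∀ {a a' b : M}, a = a' → mul a b = mul a' b := fun h1 => by rw [h1]
  have mcR : ∀ {b b' a : M}, b = b' → mul a b = mul a b' := fun h1 => by rw [h1]
  have L1 : ∀ v0 v1 v2 v3 : M, mul (mul (mul e v0) (mul v1 v3)) v3 = mul (mul e (mul v0 v2)) (mul v2 v1) := by
    intro v0 v1 v2 v3
    calc mul (mul (mul e v0) (mul v1 v3)) v3
      _ = mul (mul (mul e (mul (mul (mul e (mul v0 v2)) (mul v2 v1)) v1)) (mul v1 v3)) v3 := ((mcL (mcL (mcR (h v0 v2 v1))))).symm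
      _ = mul (mul e (mul v0 v2)) (mul v2 v1) := (h (mul (mul e (mul v0 v2)) (mul v2 v1)) v1 v3)
  have L2 : ∀ v0 v1 v2 : M, mul (mul e (mul (mul v0 v1) v2)) (mul v2 v1) = v0 := by
    intro v0 v1 v2
    calc mul (mul e (mul (mul v0 v1) v2)) (mul v2 v1)
      _ = mul (mul (mul e (mul v0 v1)) (mul v1 e)) e := ((L1 (mul v0 v1) v1 v2 e)).symm
      _ = v0 := (h v0 v1 e)
  have L3 : ∀ v0 v1 v2 : M, mul (mul (mul (mul e v0) (mul v1 v2)) v2) v1 = v0 := by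
    intro v0 v1 v2
    calc mul (mul (mul (mul e v0) (mul v1 v2)) v2) v1
      _ = mul (mul (mul e (mul v0 e)) (mul e v1)) v1 := ((mcL (L1 v0 v1 e v2).symm)).symm
      _ = v0 := (h v0 e v1)
  have L4 : ∀ v0 v1 v2 : M, mul (mul e v0) (mul v2 (mul v1 v2)) = mul e (mul v0 v1) := by
    intro v0 v1 v2
    calc mul (mul e v0) (mul v2 (mul v1 v2))
      _ = mul (mul e (mul (mul (mul e (mul v0 v1)) (mul v1 v2)) v2)) (mul v2 (mul v1 v2)) := ((mcL (mcR (h v0 v1 v2)))).symm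
      _ = mul e (mul v0 v1) := (L2 (mul e (mul v0 v1)) (mul v1 v2) v2)
  have L5 : ∀ v0 v1 : M, mul e (mul (mul (mul v0 (mul v1 v1)) v1) v1) = v0 := by
    intro v0 v1
    calc mul e (mul (mul (mul v0 (mul v1 v1)) v1) v1)
      _ = mul (mul e (mul (mul v0 (mul v1 v1)) v1)) (mul v1 (mul v1 v1)) := ((L4 (mul (mul v0 (mul v1 v1)) v1) v1 v1)).symm
      _ = v0 := (L2 v0 (mul v1 v1) v1)
  have L6 : ∀ v0 v1 v2 : M, mul (mul e v0) (mul (mul v2 v1) (mul (mul v0 v1) v2)) = e := by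
    intro v0 v1 v2
    calc mul (mul e v0) (mul (mul v2 v1) (mul (mul v0 v1) v2))
      _ = mul (mul e (mul (mul e (mul (mul v0 v1) v2)) (mul v2 v1))) (mul (mul v2 v1) (mul (mul v0 v1) v2)) := ((mcL (mcR (L2 v0 v1 v2)))).symm
      _ = e := (L2 e (mul (mul v0 v1) v2) (mul v2 v1))
  have L7 : ∀ v0 v1 v2 : M, mul e (mul (mul (mul v0 (mul v2 v1)) v1) v2) = v0 := by
    intro v0 v1 v2
    calc mul e (mul (mul (mul v0 (mul v2 v1)) v1) v2)
      _ = mul (mul (mul e (mul v0 (mul v2 v1))) (mul (mul v2 v1) (mul (mul (mul v0 (mul v2 v1)) v1) v2))) (mul (mul (mul v0 (mul v2 v1)) v1) v2) := ((mcL (L6 (mul v0 (mul v2 v1)) v1 v2))).symm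
      _ = v0 := (h v0 (mul v2 v1) (mul (mul (mul v0 (mul v2 v1)) v1) v2))
  have L8 : ∀ v0 v1 v2 : M, mul (mul v0 (mul v1 v2)) v2 = mul (mul v0 (mul v1 v1)) v1 := by
    intro v0 v1 v2
    calc mul (mul v0 (mul v1 v2)) v2
      _ = mul (mul (mul e (mul (mul (mul v0 (mul v1 v1)) v1) v1)) (mul v1 v2)) v2 := ((mcL (mcL (L5 v0 v1)))).symm
      _ = mul (mul v0 (mul v1 v1)) v1 := (h (mul (mul v0 (mul v1 v1)) v1) v1 v2)
  have L9 : ∀ v0 v1 v2 v3 : M, mul (mul v0 (mul v1 v3)) v3 = mul (mul v0 (mul v1 v2)) v2 := by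
    intro v0 v1 v2 v3
    calc mul (mul v0 (mul v1 v3)) v3
      _ = mul (mul (mul e (mul (mul (mul v0 (mul v1 v2)) v2) v1)) (mul v1 v3)) v3 := ((mcL (mcL (L7 v0 v2 v1)))).symm
      _ = mul (mul v0 (mul v1 v2)) v2 := (h (mul (mul v0 (mul v1 v2)) v2) v1 v3)
  have L10 : ∀ v0 v1 : M, mul e (mul (mul v0 v1) (mul (mul v0 (mul v1 v1)) v1)) = e := by
    intro v0 v1
    calc mul e (mul (mul v0 v1) (mul (mul v0 (mul v1 v1)) v1))
      _ = mul e (mul (mul (mul e (mul (mul (mul v0 (mul v1 v1)) v1) v1)) v1) (mul (mul v0 (mul v1 v1)) v1)) := ((mcR (mcL (mcL (L5 v0 v1))))).symm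
      _ = e := (L7 e v1 (mul (mul v0 (mul v1 v1)) v1))
  have L11 : ∀ v0 v1 v2 : M, mul e (mul (mul v0 v1) (mul (mul v0 (mul v1 v2)) v2)) = e := by
    intro v0 v1 v2
    calc mul e (mul (mul v0 v1) (mul (mul v0 (mul v1 v2)) v2))
      _ = mul e (mul (mul (mul e (mul (mul (mul v0 (mul v1 v2)) v2) v1)) v1) (mul (mul v0 (mul v1 v2)) v2)) := ((mcR (mcL (mcL (L7 v0 v2 v1))))).symm
      _ = e := (L7 e v1 (mul (mul v0 (mul v1 v2)) v2))
  have L14 : ∀ v0 v1 v2 : M, mul e (mul (mul (mul v0 (mul v2 (mul v1 v2))) (mul v1 v1)) v1) = v0 := by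
    intro v0 v1 v2
    calc mul e (mul (mul (mul v0 (mul v2 (mul v1 v2))) (mul v1 v1)) v1)
      _ = mul e (mul (mul (mul v0 (mul v2 (mul v1 v2))) (mul v1 v2)) v2) := ((mcR (L8 (mul v0 (mul v2 (mul v1 v2))) v1 v2))).symm
      _ = v0 := (L7 v0 (mul v1 v2) v2)
  have L15 : ∀ v0 v1 v2 : M, mul v0 (mul v1 (mul v1 v1)) = mul v0 (mul v2 (mul v1 v2)) := by
    intro v0 v1 v2
    calc mul v0 (mul v1 (mul v1 v1))
      _ = mul (mul e (mul (mul (mul v0 (mul v2 (mul v1 v2))) (mul v1 v1)) v1)) (mul v1 (mul v1 v1)) := ((mcL (L14 v0 v1 v2))).symm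
      _ = mul v0 (mul v2 (mul v1 v2)) := (L2 (mul v0 (mul v2 (mul v1 v2))) (mul v1 v1) v1)
  have L16 : ∀ v0 v1 v2 v3 : M, mul v0 (mul v3 (mul v1 v3)) = mul v0 (mul v2 (mul v1 v2)) := by
    intro v0 v1 v2 v3
    calc mul v0 (mul v3 (mul v1 v3))
      _ = mul v0 (mul v1 (mul v1 v1)) := ((L15 v0 v1 v3)).symm
      _ = mul v0 (mul v2 (mul v1 v2)) := (L15 v0 v1 v2)
  have L18 : ∀ v0 v1 v2 : M, e = mul e (mul v2 (mul (mul v0 (mul v1 (mul v0 v1))) v2)) := by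
    intro v0 v1 v2
    calc e
      _ = mul e (mul (mul v0 v1) (mul (mul v0 (mul v1 (mul v0 v1))) (mul v0 v1))) := ((L11 v0 v1 (mul v0 v1))).symm
      _ = mul e (mul v2 (mul (mul v0 (mul v1 (mul v0 v1))) v2)) := (L16 e (mul v0 (mul v1 (mul v0 v1))) v2 (mul v0 v1))
  have L21 : ∀ v0 v1 v2 : M, mul (mul (mul (mul e (mul v0 v2)) v2) v2) v1 = mul v0 (mul v1 v2) := by
    intro v0 v1 v2
    calc mul (mul (mul (mul e (mul v0 v2)) v2) v2) v1
      _ = mul (mul (mul (mul e (mul v0 (mul v1 v2))) (mul v1 v2)) v2) v1 := ((mcL (mcL (L9 e v0 (mul v1 v2) v2).symm))).symm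
      _ = mul v0 (mul v1 v2) := (L3 (mul v0 (mul v1 v2)) v1 v2)
  have L28 : ∀ v0 v1 : M, mul e (mul (mul e (mul (mul v0 (mul v1 v1)) v1)) (mul v0 v1)) = e := by
    intro v0 v1
    calc mul e (mul (mul e (mul (mul v0 (mul v1 v1)) v1)) (mul v0 v1))
      _ = mul e (mul (mul (mul e (mul (mul v0 v1) (mul (mul v0 (mul v1 v1)) v1))) (mul (mul v0 (mul v1 v1)) v1)) (mul v0 v1)) := ((mcR (mcL (mcL (L10 v0 v1))))).symm
      _ = e := (L7 e (mul (mul v0 (mul v1 v1)) v1) (mul v0 v1))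
  have L29 : ∀ v0 v1 v2 : M, mul e (mul v0 (mul (mul v0 (mul v2 (mul v1 v2))) v1)) = e := by
    intro v0 v1 v2
    calc mul e (mul v0 (mul (mul v0 (mul v2 (mul v1 v2))) v1))
      _ = mul e (mul (mul e (mul (mul (mul v0 (mul v2 (mul v1 v2))) (mul v1 v1)) v1)) (mul (mul v0 (mul v2 (mul v1 v2))) v1)) := ((mcR (mcL (L14 v0 v1 v2)))).symm
      _ = e := (L28 (mul v0 (mul v2 (mul v1 v2))) v1)
  have L30 : ∀ v0 v1 : M, mul e (mul e (mul e (mul v0 (mul v1 (mul v0 v1))))) = e := by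
    intro v0 v1
    calc mul e (mul e (mul e (mul v0 (mul v1 (mul v0 v1)))))
      _ = mul e (mul e (mul (mul e (mul e (mul (mul v0 (mul v1 (mul v0 v1))) e))) (mul v0 (mul v1 (mul v0 v1))))) := ((mcR (mcR (mcL (L18 v0 v1 e).symm)))).symm
      _ = e := (L29 e (mul v0 (mul v1 (mul v0 v1))) e)
  have L32 : ∀ v0 v1 v2 : M, mul e (mul (mul e (mul (mul v2 (mul v0 v2)) v1)) (mul v1 v0)) = e := by
    intro v0 v1 v2
    calc mul e (mul (mul e (mul (mul v2 (mul v0 v2)) v1)) (mul v1 v0))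
      _ = mul e (mul (mul (mul e (mul v2 (mul v0 v2))) (mul v0 v0)) v0) := ((mcR (L1 (mul v2 (mul v0 v2)) v0 v1 v0))).symm
      _ = e := (L14 e v0 v2)
  have L33 : ∀ v0 : M, mul e (mul e (mul (mul v0 e) (mul v0 (mul e e)))) = e := by
    intro v0
    calc mul e (mul e (mul (mul v0 e) (mul v0 (mul e e))))
      _ = mul e (mul (mul e (mul (mul e (mul (mul v0 (mul e e)) e)) (mul v0 e))) (mul (mul v0 e) (mul v0 (mul e e)))) := ((mcR (mcL (L28 v0 e)))).symm
      _ = e := (L32 (mul v0 (mul e e)) (mul v0 e) e)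
  have L34 : mul e (mul e e) = e := by
    calc mul e (mul e e)
      _ = mul e (mul e (mul e (mul e (mul (mul e e) (mul e (mul e e)))))) := ((mcR (mcR (L33 e)))).symm
      _ = e := (L30 e (mul e e))
  have L35 : ∀ v0 : M, mul (mul e (mul e v0)) v0 = e := by
    intro v0
    calc mul (mul e (mul e v0)) v0
      _ = mul (mul (mul e (mul e e)) (mul e v0)) v0 := ((mcL (mcL (L34)))).symm
      _ = e := (h e e v0)
  have L36 : mul e e = e := by
    calc mul e e
      _ = mul (mul e (mul e e)) e := ((mcL (L34))).symm
      _ = e := (L35 e)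
  have L37 : ∀ v0 : M, mul e (mul e (mul v0 (mul e v0))) = e := by
    intro v0
    calc mul e (mul e (mul v0 (mul e v0)))
      _ = mul e (mul e (mul (mul e e) (mul e (mul e e)))) := ((mcR (L16 e e v0 (mul e e)))).symm
      _ = e := (L33 e)
  have L38 : ∀ v0 : M, mul e (mul v0 (mul e v0)) = e := by
    intro v0
    calc mul e (mul v0 (mul e v0))
      _ = mul (mul e (mul e (mul v0 (mul e v0)))) (mul v0 (mul e v0)) := ((mcL (L37 v0))).symm
      _ = e := (L35 (mul v0 (mul e v0)))
  have L39 : ∀ v0 : M, mul (mul e v0) e = mul e (mul v0 e) := by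
    intro v0
    calc mul (mul e v0) e
      _ = mul (mul e v0) (mul e (mul e e)) := ((mcR (L34))).symm
      _ = mul e (mul v0 e) := (L4 v0 e e)
  have L42 : ∀ v0 v1 : M, mul (mul e v1) v0 = mul e (mul v0 v1) := by
    intro v0 v1
    calc mul (mul e v1) v0
      _ = mul (mul (mul (mul e (mul e v1)) v1) v1) v0 := ((mcL (mcL (L35 v1)))).symm
      _ = mul e (mul v0 v1) := (L21 e v0 v1)
  have L43 : ∀ v0 : M, mul e v0 = mul e (mul v0 e) := by
    intro v0
    calc mul e v0
      _ = mul (mul e e) v0 := ((mcL (L36))).symm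
      _ = mul e (mul v0 e) := (L42 v0 e)
  have L44 : ∀ v0 : M, mul e v0 = v0 := by
    intro v0
    calc mul e v0
      _ = mul e (mul v0 e) := ((L43 v0).symm).symm
      _ = mul e (mul (mul v0 e) e) := ((L43 (mul v0 e)).symm).symm
      _ = mul (mul e e) (mul (mul v0 e) e) := ((mcL (L36))).symm
      _ = mul e (mul (mul (mul v0 e) e) e) := ((L42 (mul (mul v0 e) e) e).symm).symm
      _ = mul (mul e (mul (mul v0 e) e)) e := ((L39 (mul (mul v0 e) e))).symm
      _ = mul (mul (mul e (mul v0 e)) e) e := ((mcL (L39 (mul v0 e)))).symm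
      _ = mul (mul (mul e (mul v0 e)) (mul e e)) e := ((mcL (mcR (L36)))).symm
      _ = v0 := (h v0 e e)
  have L45 : ∀ v0 : M, mul v0 v0 = e := by
    intro v0
    calc mul v0 v0
      _ = mul e (mul v0 v0) := ((L44 (mul v0 v0))).symm
      _ = mul (mul e v0) v0 := ((L42 v0 v0)).symm
      _ = mul (mul e (mul e v0)) v0 := ((mcL (L44 (mul e v0)))).symm
      _ = e := (L35 v0)
  have L47 : ∀ v0 v1 : M, mul v1 v0 = mul v0 v1 := by
    intro v0 v1
    calc mul v1 v0
      _ = mul (mul e v1) v0 := ((mcL (L44 v1))).symm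
      _ = mul e (mul v0 v1) := (L42 v0 v1)
      _ = mul v0 v1 := (L44 (mul v0 v1))
  have L50 : ∀ v0 v1 : M, mul v1 (mul v0 v1) = v0 := by
    intro v0 v1
    calc mul v1 (mul v0 v1)
      _ = mul v1 (mul (mul e v0) v1) := ((mcR (mcL (L44 v0)))).symm
      _ = mul e (mul v1 (mul (mul e v0) v1)) := ((L44 (mul v1 (mul (mul e v0) v1)))).symm
      _ = mul (mul e (mul (mul e v0) v1)) v1 := ((L42 v1 (mul (mul e v0) v1))).symm
      _ = mul (mul (mul e (mul v0 (mul e v0))) (mul (mul e v0) v1)) v1 := ((mcL (mcL (L38 v0)))).symm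
      _ = v0 := (h v0 (mul e v0) v1)
  have L51 : ∀ v0 v1 : M, mul v1 (mul v1 v0) = v0 := by
    intro v0 v1
    calc mul v1 (mul v1 v0)
      _ = mul v1 (mul v0 v1) := ((mcR (L47 v1 v0))).symm
      _ = v0 := (L50 v0 v1)
  have L53 : ∀ v0 v1 v2 : M, mul v2 (mul (mul v0 v1) (mul v1 v2)) = v0 := by
    intro v0 v1 v2
    calc mul v2 (mul (mul v0 v1) (mul v1 v2))
      _ = mul (mul (mul v0 v1) (mul v1 v2)) v2 := ((L47 v2 (mul (mul v0 v1) (mul v1 v2)))).symm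
      _ = mul (mul (mul e (mul v0 v1)) (mul v1 v2)) v2 := ((mcL (mcL (L44 (mul v0 v1))))).symm
      _ = v0 := (h v0 v1 v2)
  have L54 : ∀ v0 v1 v2 : M, mul (mul (mul v0 v1) v2) (mul v2 v1) = v0 := by
    intro v0 v1 v2
    calc mul (mul (mul v0 v1) v2) (mul v2 v1)
      _ = mul (mul e (mul (mul v0 v1) v2)) (mul v2 v1) := ((mcL (L44 (mul (mul v0 v1) v2)))).symm
      _ = v0 := (L2 v0 v1 v2)
  have L55 : ∀ v0 v1 v2 : M, mul v1 (mul v2 (mul v0 (mul v1 v2))) = v0 := by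
    intro v0 v1 v2
    calc mul v1 (mul v2 (mul v0 (mul v1 v2)))
      _ = mul v1 (mul (mul v0 (mul v1 v2)) v2) := ((mcR (L47 v2 (mul v0 (mul v1 v2))))).symm
      _ = mul (mul (mul v0 (mul v1 v2)) v2) v1 := ((L47 v1 (mul (mul v0 (mul v1 v2)) v2))).symm
      _ = mul (mul (mul (mul e v0) (mul v1 v2)) v2) v1 := ((mcL (mcL (mcL (L44 v0))))).symm
      _ = v0 := (L3 v0 v1 v2)
  have L59 : ∀ v0 v1 v2 : M, mul v1 (mul (mul v1 v2) (mul v2 v0)) = v0 := by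
    intro v0 v1 v2
    calc mul v1 (mul (mul v1 v2) (mul v2 v0))
      _ = mul (mul (mul v1 v2) (mul v2 v0)) v1 := ((L47 v1 (mul (mul v1 v2) (mul v2 v0)))).symm
      _ = mul (mul (mul v1 v2) (mul v2 v0)) (mul v0 (mul (mul v1 v2) (mul v2 v0))) := ((mcR (L53 v1 v2 v0))).symm
      _ = v0 := (L50 v0 (mul (mul v1 v2) (mul v2 v0)))
  have L68 : ∀ v0 v1 v2 : M, mul (mul v1 v2) (mul v2 (mul v1 v0)) = v0 := by
    intro v0 v1 v2
    calc mul (mul v1 v2) (mul v2 (mul v1 v0))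
      _ = mul (mul (mul v0 (mul v1 v0)) v2) (mul v2 (mul v1 v0)) := ((mcL (mcL (L50 v1 v0)))).symm
      _ = v0 := (L54 v0 (mul v1 v0) v2)
  have L69 : ∀ v0 v1 v2 : M, mul v0 (mul (mul v0 v1) v2) = mul v2 v1 := by
    intro v0 v1 v2
    calc mul v0 (mul (mul v0 v1) v2)
      _ = mul (mul (mul v0 v1) v2) v0 := ((L47 v0 (mul (mul v0 v1) v2))).symm
      _ = mul (mul (mul v0 v1) v2) (mul (mul (mul v0 v1) v2) (mul v2 v1)) := ((mcR (L54 v0 v1 v2))).symm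
      _ = mul v2 v1 := (L51 (mul v2 v1) (mul (mul v0 v1) v2))
  have L72 : ∀ v0 v1 v2 : M, mul v1 v0 = mul v2 (mul v0 (mul v1 v2)) := by
    intro v0 v1 v2
    calc mul v1 v0
      _ = mul v1 (mul v1 (mul v2 (mul v0 (mul v1 v2)))) := ((mcR (L55 v0 v1 v2))).symm
      _ = mul v2 (mul v0 (mul v1 v2)) := (L51 (mul v2 (mul v0 (mul v1 v2))) v1)
  have L93 : ∀ v0 v1 v2 : M, mul (mul v1 v2) v0 = mul v2 (mul v1 v0) := by
    intro v0 v1 v2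
    calc mul (mul v1 v2) v0
      _ = mul (mul v1 v2) (mul (mul v1 v2) (mul v2 (mul v1 v0))) := ((mcR (L68 v0 v1 v2))).symm
      _ = mul v2 (mul v1 v0) := (L51 (mul v2 (mul v1 v0)) (mul v1 v2))
  have L94 : ∀ v0 v1 v2 : M, mul v2 (mul v1 v0) = mul v0 (mul v2 v1) := by
    intro v0 v1 v2
    calc mul v2 (mul v1 v0)
      _ = mul v2 (mul v2 (mul (mul v2 v0) v1)) := ((mcR (L69 v2 v0 v1))).symm
      _ = mul (mul v2 v0) v1 := (L51 (mul (mul v2 v0) v1) v2)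
      _ = mul v0 (mul v2 v1) := (L93 v1 v2 v0)
  have L97 : ∀ v0 v1 v2 : M, mul v0 (mul v2 v1) = mul v2 (mul v0 v1) := by
    intro v0 v1 v2
    calc mul v0 (mul v2 v1)
      _ = mul v0 (mul (mul v0 v1) (mul v1 (mul v2 (mul v0 v1)))) := ((mcR (L72 v1 v2 (mul v0 v1)).symm)).symm
      _ = mul v2 (mul v0 v1) := (L59 (mul v2 (mul v0 v1)) v0 v1)
  refine ⟨?_, ?_, ?_, ?_⟩
  · intro x y z
    calc mul (mul x y) z
      _ = mul z (mul x y) := (L47 z (mul x y))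
      _ = mul z (mul y x) := (mcR (L47 y x))
      _ = mul y (mul z x) := ((L97 y x z)).symm
      _ = mul y (mul x z) := ((mcR (L47 z x))).symm
      _ = mul x (mul z y) := ((L94 y z x)).symm
      _ = mul x (mul y z) := ((mcR (L47 z y))).symm
  · intro x y
    calc mul x y
      _ = mul y x := (L47 y x)
  · intro x
    calc mul e x
      _ = x := (L44 x)
  · intro x
    calc mul x x
      _ = e := (L45 x)
end

section
/- Let M be a type equipped with a binary operation · and a distinguished element e, and suppose that e·(((x·(y·z))·y)·z) = x holds for all x, y, z ∈ M (formula 81R1↓). Then (M, ·) is a Boolean group with identity element e: the operation · is associative and commutative, e·x = x for all x, and x·x = e for all x. -/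
theorem single_axiom_81R1down
    (M : Type) (mul : M → M → M) (e : M)
    (h : ∀ x y z : M, mul e (mul (mul (mul x (mul y z)) y) z) = x) :
    (∀ x y z : M, mul (mul x y) z = mul x (mul y z)) ∧
    (∀ x y : M, mul x y = mul y x) ∧
    (∀ x : M, mul e x = x) ∧
    (∀ x : M, mul x x = e) := by
  -- notation
  set m := mul with hm
  -- L1 : e*((a*((a*(b*c))*b))*c) = e
  have L1 : ∀ a b c, m e (m (m a (m (m a (m b c)) b)) c) = e := by
    intro a b c
    have t := h e (m (m a (m b c)) b) c
    rwa [h a b c] at t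
  -- L2 : e*((e*(y*((y*(z*a))*z)))*a) = e
  have L2 : ∀ y z a, m e (m (m e (m y (m (m y (m z a)) z))) a) = e := by
    intro y z a
    have t := h e (m y (m (m y (m z a)) z)) a
    rwa [L1 y z a] at t
  -- L3 : e*(e*((a*(b*a))*b)) = e
  have L3 : ∀ a b, m e (m e (m (m a (m b a)) b)) = e := by
    intro a b
    have t := L1 e a (m (m a (m b a)) b)
    rwa [L2 a b a] at t
  -- L4 : e*(e*e) = e
  have L4 : m e (m e e) = e := by
    have t := L2 e e e
    rwa [L3 e e] at t
  -- L5 : e*e = e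
  have L5 : m e e = e := by
    have t := L3 e e
    rw [L4] at t
    rwa [L4] at t
  -- L6 : e*(((x*e)*e)*e) = x
  have L6 : ∀ x, m e (m (m (m x e) e) e) = x := by
    intro x
    have t := h x e e
    rwa [L5] at t
  -- L7 : e*((a*((a*e)*e))*e) = e
  have L7 : ∀ a, m e (m (m a (m (m a e) e)) e) = e := by
    intro a
    have t := L1 a e e
    rwa [L5] at t
  -- L8 : e*(a*((a*e)*e)) = e
  have L8 : ∀ a, m e (m a (m (m a e) e)) = e := by
    intro a
    have t := L3 (m (m a (m (m a e) e)) e) e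
    rw [L7 a] at t
    rwa [L6 (m a (m (m a e) e))] at t
  -- L11 : e*((e*(e*x))*((x*e)*e)) = e
  have L11 : ∀ x, m e (m (m e (m e x)) (m (m x e) e)) = e := by
    intro x
    have t := L1 e x (m (m x e) e)
    rwa [L8 x] at t
  -- L12 : e*(((x*y)*e)*(((y*e)*e)*e)) = x
  have L12 : ∀ x y, m e (m (m (m x y) e) (m (m (m y e) e) e)) = x := by
    intro x y
    have t := h x e (m (m (m y e) e) e)
    rwa [L6 y] at t
  -- L13 : e*(e*(((((x*e)*e)*e)*x)*e)) = e
  have L13 : ∀ x, m e (m e (m (m (m (m (m x e) e) e) x) e)) = e := by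
    intro x
    have t := L3 (m (m (m x e) e) e) e
    rwa [L6 x] at t
  -- L14 : e*((((x*e)*e)*e)*x) = e
  have L14 : ∀ x, m e (m (m (m (m x e) e) e) x) = e := by
    intro x
    have t := L11 (m (m (m (m (m x e) e) e) x) e)
    rw [L13 x] at t
    rwa [L6 (m (m (m (m x e) e) e) x)] at t
  -- L15 : e*(a*a) = e
  have L15 : ∀ a, m e (m a a) = e := by
    intro a
    have t := h e (m (m (m a e) e) e) a
    rw [L14 a] at t
    rwa [L6 a] at t
  -- L18 : e*(((x*e)*e)*(a*a)) = x
  have L18 : ∀ x a, m e (m (m (m x e) e) (m a a)) = x := by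
    intro x a
    have t := h x e (m a a)
    rwa [L15 a] at t
  -- L19 : (y*y)*e = e
  have L19 : ∀ y, m (m y y) e = e := by
    intro y
    have t1 := L14 (m y y)
    have t2 := L18 (m (m y y) e) y
    rw [t1] at t2
    exact t2.symm
  -- L20 : x*x = e
  have L20 : ∀ a, m a a = e := by
    intro a
    have t := L6 (m a a)
    rw [L19 a, L5, L5, L5] at t
    exact t.symm
  -- L21 : e*x = x
  have L21 : ∀ a, m e a = a := by
    intro a
    have t := L12 a a
    rw [L19 a] at t
    rwa [L6 a] at t
  -- A' : ((x*(y*z))*y)*z = x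
  have A : ∀ x y z, m (m (m x (m y z)) y) z = x := by
    intro x y z
    have t := h x y z
    rwa [L21] at t
  -- B : ((x*e)*y)*y = x
  have B : ∀ x y, m (m (m x e) y) y = x := by
    intro x y
    have t := A x y y
    rwa [L20 y] at t
  -- L23 : x*e = x
  have L23 : ∀ x, m x e = x := by
    intro x
    have t := B x (m x e)
    rw [L20 (m x e)] at t
    rwa [L21] at t
  -- L24 : (x*y)*y = x
  have L24 : ∀ x y, m (m x y) y = x := by
    intro x y
    have t := B x y
    rwa [L23 x] at t
  -- D : ((y*z)*y)*z = e
  have D : ∀ y z, m (m (m y z) y) z = e := by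
    intro y z
    have t := A e y z
    rwa [L21 (m y z)] at t
  -- L26 : (y*z)*y = z
  have L26 : ∀ y z, m (m y z) y = z := by
    intro y z
    have t := L24 (m (m y z) y) z
    rw [D y z] at t
    rw [L21 z] at t
    exact t.symm
  -- comm
  have comm : ∀ x y, m x y = m y x := by
    intro x y
    calc m x y = m (m (m x y) x) x := (L24 (m x y) x).symm
    _ = m y x := by rw [L26 x y]
  -- E : x*(y*z) = (x*z)*y
  have E : ∀ x y z, m x (m y z) = m (m x z) y := by
    intro x y z
    have t1 : m (m x (m y z)) y = m x z := by
      have t := L24 (m (m x (m y z)) y) z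
      rw [A x y z] at t; exact t.symm
    calc m x (m y z) = m (m (m x (m y z)) y) y := (L24 _ y).symm
    _ = m (m x z) y := by rw [t1]
  have assoc : ∀ x y z, m (m x y) z = m x (m y z) := by
    intro x y z
    calc m (m x y) z = m x (m z y) := (E x z y).symm
    _ = m x (m y z) := by rw [comm z y]
  exact ⟨assoc, comm, L21, L20⟩
end

section
/- Let M be a type equipped with a binary operation · and a distinguished element e, and suppose that (e·((x·y)·z))·(y·z) = x holds for all x, y, z ∈ M (formula 81L2↓). Then (M, ·) is a Boolean group with identity element e: the operation · is associative and commutative, e·x = x for all x, and x·x = e for all x. -/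
set_option linter.unreachableTactic false
set_option linter.unusedTactic false

theorem single_axiom_81L2down
    (M : Type) (mul : M → M → M) (e : M)
    (h : ∀ x y z : M, mul (mul e (mul (mul x y) z)) (mul y z) = x) :
    (∀ x y z : M, mul (mul x y) z = mul x (mul y z)) ∧
    (∀ x y : M, mul x y = mul y x) ∧
    (∀ x : M, mul e x = x) ∧
    (∀ x : M, mul x x = e) := by
  have R0 : ∀ a0 a1 a2 : M, mul (mul e (mul (mul a0 a1) a2)) (mul a1 a2) = a0 := h
  have R1 : ∀ a0 a1 a2 : M, mul (mul e a0) (mul (mul (mul a0 a1) a2) (mul a1 a2)) = e := by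
    intro a0 a1 a2
    conv_rhs => rw [← R0 e (mul (mul a0 a1) a2) (mul a1 a2)]
    conv_rhs => enter [1, 2]; rw [R0 a0 a1 a2]
    all_goals rfl
  have R2 : ∀ a0 a1 a2 : M, mul (mul e e) (mul a0 (mul (mul (mul a0 a1) a2) (mul a1 a2))) = e := by
    intro a0 a1 a2
    conv_rhs => rw [← R1 e (mul (mul a0 a1) a2) (mul a1 a2)]
    conv_rhs => enter [2, 1]; rw [R0 a0 a1 a2]
    all_goals rfl
  have R3 : ∀ a0 a1 a2 a3 : M, mul (mul e (mul (mul a0 (mul e (mul (mul a1 a2) a3))) (mul a2 a3))) a1 = a0 := by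
    intro a0 a1 a2 a3
    conv_rhs => rw [← R0 a0 (mul e (mul (mul a1 a2) a3)) (mul a2 a3)]
    conv_rhs => enter [2]; rw [R0 a1 a2 a3]
    all_goals rfl
  have R4 : ∀ a0 a1 : M, mul (mul e (mul e (mul a0 (mul a1 a0)))) (mul e a1) = (mul e e) := by
    intro a0 a1
    conv_rhs => rw [← R3 (mul e e) (mul e a1) a0 (mul a1 a0)]
    conv_rhs => enter [1, 2, 1]; rw [R2 e a1 a0]
    all_goals rfl
  have R5 : ∀ a0 : M, mul (mul e (mul e e)) (mul e (mul (mul a0 e) a0)) = (mul e e) := by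
    intro a0
    conv_rhs => rw [← R4 (mul e a0) (mul (mul a0 e) a0)]
    conv_rhs => enter [1, 2, 2]; rw [R1 a0 e a0]
    all_goals rfl
  have R6 : ∀ a0 : M, mul (mul e (mul (mul e e) (mul e a0))) a0 = (mul e (mul e e)) := by
    intro a0
    conv_rhs => rw [← R3 (mul e (mul e e)) a0 e a0]
    conv_rhs => enter [1, 2, 1]; rw [R5 a0]
    all_goals rfl
  have R7 : ∀ a0 a1 a2 : M, mul (mul e e) (mul e (mul a0 (mul (mul (mul a0 a1) a2) (mul a1 a2)))) = e := by
    intro a0 a1 a2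
    conv_rhs => rw [← R1 e a0 (mul (mul (mul a0 a1) a2) (mul a1 a2))]
    conv_rhs => enter [2, 1]; rw [R1 a0 a1 a2]
    all_goals rfl
  have R8 : ∀ a0 a1 : M, mul (mul e (mul e e)) (mul (mul e (mul a0 (mul a1 a0))) (mul e a1)) = e := by
    intro a0 a1
    conv_rhs => rw [← R0 e (mul e (mul a0 (mul a1 a0))) (mul e a1)]
    conv_rhs => enter [1, 2]; rw [R4 a0 a1]
    all_goals rfl
  have R9 : mul (mul e (mul e e)) (mul e (mul e e)) = e := by
    conv_rhs => rw [← R8 (mul e e) e]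
    conv_rhs => enter [2]; rw [R6 (mul e e)]
    all_goals rfl
  have R10 : mul (mul e e) (mul (mul e e) (mul e (mul e e))) = e := by
    conv_rhs => rw [← R0 e (mul e e) (mul e (mul e e))]
    conv_rhs => enter [1, 2]; rw [R9 ]
    all_goals rfl
  have R11 : mul (mul e e) (mul e (mul (mul e e) (mul e (mul e e)))) = e := by
    conv_rhs => rw [← R1 e (mul e e) (mul e (mul e e))]
    conv_rhs => enter [2, 1]; rw [R9 ]
    all_goals rfl
  have R12 : mul (mul e (mul e (mul e (mul e (mul e e))))) e = (mul e e) := by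
    conv_rhs => rw [← R3 (mul e e) e e (mul e (mul e e))]
    conv_rhs => enter [1, 2, 1]; rw [R11 ]
    all_goals rfl
  have R13 : ∀ a0 : M, mul (mul e (mul e e)) (mul (mul e e) (mul e (mul (mul a0 e) a0))) = e := by
    intro a0
    conv_rhs => rw [← R0 e (mul e e) (mul e (mul (mul a0 e) a0))]
    conv_rhs => enter [1, 2]; rw [R5 a0]
    all_goals rfl
  have R14 : mul (mul e (mul e e)) e = e := by
    conv_rhs => rw [← R13 (mul e e)]
    conv_rhs => enter [2]; rw [R2 e e e]
    all_goals rfl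
  have R15 : mul (mul e e) (mul (mul e e) e) = e := by
    conv_rhs => rw [← R0 e (mul e e) e]
    conv_rhs => enter [1, 2]; rw [R14 ]
    all_goals rfl
  have R16 : mul (mul e e) (mul e (mul (mul e e) e)) = e := by
    conv_rhs => rw [← R1 e (mul e e) e]
    conv_rhs => enter [2, 1]; rw [R14 ]
    all_goals rfl
  have R17 : mul (mul e (mul e (mul e e))) e = (mul e e) := by
    conv_rhs => rw [← R3 (mul e e) e e e]
    conv_rhs => enter [1, 2, 1]; rw [R16 ]
    all_goals rfl
  have R18 : ∀ a0 : M, mul (mul e (mul e a0)) (mul e a0) = (mul e (mul e e)) := by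
    intro a0
    conv_rhs => rw [← R0 (mul e (mul e e)) e a0]
    conv_rhs => enter [1, 2, 1]; rw [R14 ]
    all_goals rfl
  have R19 : ∀ a0 : M, mul (mul e (mul (mul a0 (mul e (mul e e))) e)) e = a0 := by
    intro a0
    conv_rhs => rw [← R0 a0 (mul e (mul e e)) e]
    conv_rhs => enter [2]; rw [R14 ]
    all_goals rfl
  have R20 : mul e (mul e e) = e := by
    conv_lhs => rw [← R19 (mul e (mul e e))]
    conv_lhs => enter [1, 2, 1]; rw [R9 ]
    conv_lhs => rw [R14 ]
    all_goals rfl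
  have R21 : mul e e = e := by
    conv_rhs => rw [← R14 ]
    conv_rhs => enter [1]; rw [R20 ]
    all_goals rfl
  have R22 : ∀ a0 : M, mul (mul e (mul (mul a0 e) e)) e = a0 := by
    intro a0
    conv_rhs => rw [← R19 a0]
    conv_rhs => enter [1, 2, 1, 2]; rw [R20 ]
    all_goals rfl
  have R23 : ∀ a0 : M, mul e (mul e (mul (mul a0 e) a0)) = e := by
    intro a0
    conv_rhs => rw [← R21 ]
    conv_rhs => rw [← R5 a0]
    conv_rhs => enter [1]; rw [R20 ]
    all_goals rfl
  have R24 : ∀ a0 : M, mul (mul e (mul e (mul e a0))) a0 = e := by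
    intro a0
    conv_rhs => rw [← R3 e a0 e a0]
    conv_rhs => enter [1, 2, 1]; rw [R23 a0]
    all_goals rfl
  have R25 : ∀ a0 : M, mul e (mul (mul a0 e) a0) = e := by
    intro a0
    conv_rhs => rw [← R24 (mul (mul a0 e) a0)]
    conv_rhs => enter [1, 2]; rw [R23 a0]
    conv_rhs => enter [1]; rw [R21 ]
    all_goals rfl
  have R26 : ∀ a0 : M, mul e (mul e a0) = a0 := by
    intro a0
    conv_rhs => rw [← R0 a0 e a0]
    conv_rhs => enter [1]; rw [R25 a0]
    all_goals rfl
  have R27 : ∀ a0 : M, mul (mul a0 e) a0 = e := by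
    intro a0
    conv_lhs => rw [← R26 (mul (mul a0 e) a0)]
    conv_lhs => rw [R23 a0]
    all_goals rfl
  have R28 : ∀ a0 : M, mul (mul e a0) a0 = e := by
    intro a0
    conv_rhs => rw [← R24 a0]
    conv_rhs => enter [1]; rw [R26 (mul e a0)]
    all_goals rfl
  have R29 : ∀ a0 : M, mul a0 (mul e a0) = e := by
    intro a0
    conv_rhs => rw [← R28 (mul e a0)]
    conv_rhs => enter [1]; rw [R26 a0]
    all_goals rfl
  have R30 : ∀ a0 : M, mul e (mul a0 a0) = e := by
    intro a0
    conv_rhs => rw [← R0 e a0 a0]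
    conv_rhs => enter [1, 2]; rw [R28 a0]
    conv_rhs => enter [1]; rw [R21 ]
    all_goals rfl
  have R31 : ∀ a0 : M, mul a0 a0 = e := by
    intro a0
    conv_lhs => rw [← R26 (mul a0 a0)]
    conv_lhs => enter [2]; rw [R30 a0]
    conv_lhs => rw [R21 ]
    all_goals rfl
  have R32 : ∀ a0 a1 : M, mul e (mul a0 (mul a1 a0)) = a1 := by
    intro a0 a1
    conv_rhs => rw [← R0 a1 a0 (mul a1 a0)]
    conv_rhs => enter [1]; rw [R30 (mul a1 a0)]
    all_goals rfl
  have R33 : ∀ a0 : M, mul a0 e = a0 := by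
    intro a0
    conv_rhs => rw [← R32 e a0]
    conv_rhs => rw [R26 (mul a0 e)]
    all_goals rfl
  have R34 : ∀ a0 : M, mul e a0 = a0 := by
    intro a0
    conv_rhs => rw [← R32 a0 a0]
    conv_rhs => enter [2, 2]; rw [R31 a0]
    conv_rhs => enter [2]; rw [R33 a0]
    all_goals rfl
  have R35 : ∀ a0 a1 : M, mul a0 (mul a1 a0) = a1 := by
    intro a0 a1
    conv_lhs => rw [← R34 (mul a0 (mul a1 a0))]
    conv_lhs => rw [R32 a0 a1]
    all_goals rfl
  have R36 : ∀ a0 a1 : M, mul (mul a0 a1) a0 = a1 := by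
    intro a0 a1
    conv_rhs => rw [← R35 (mul a0 a1) a1]
    conv_rhs => enter [2]; rw [R35 a1 a0]
    all_goals rfl
  have R37 : ∀ a0 a1 : M, mul (mul a0 a1) a1 = a0 := by
    intro a0 a1
    conv_rhs => rw [← R0 a0 a1 e]
    conv_rhs => enter [1]; rw [R35 e (mul a0 a1)]
    conv_rhs => enter [2]; rw [R33 a1]
    all_goals rfl
  have R38 : ∀ a0 a1 : M, mul a0 (mul a0 a1) = a1 := by
    intro a0 a1
    conv_rhs => rw [← R37 a1 (mul a0 a1)]
    conv_rhs => enter [1]; rw [R35 a1 a0]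
    all_goals rfl
  have R39 : ∀ a0 a1 a2 : M, mul a0 (mul a1 (mul a0 (mul a2 a1))) = a2 := by
    intro a0 a1 a2
    conv_rhs => rw [← R0 a2 a1 (mul a0 (mul a2 a1))]
    conv_rhs => enter [1]; rw [R32 (mul a2 a1) a0]
    all_goals rfl
  have R40 : ∀ a0 a1 a2 : M, mul (mul (mul a0 a1) a2) (mul a1 a2) = a0 := by
    intro a0 a1 a2
    conv_rhs => rw [← R0 a0 a1 a2]
    conv_rhs => enter [1]; rw [R34 (mul (mul a0 a1) a2)]
    all_goals rfl
  have R41 : ∀ a0 a1 a2 : M, mul a0 (mul (mul a1 a2) (mul a0 a1)) = a2 := by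
    intro a0 a1 a2
    conv_rhs => rw [← R39 a0 (mul a1 a2) a2]
    conv_rhs => enter [2, 2, 2]; rw [R35 a2 a1]
    all_goals rfl
  have R42 : ∀ a0 a1 a2 : M, mul (mul a0 (mul a1 (mul a2 a0))) a2 = a1 := by
    intro a0 a1 a2
    conv_rhs => rw [← R35 (mul a0 (mul a1 (mul a2 a0))) a1]
    conv_rhs => enter [2]; rw [R39 a1 a0 a2]
    all_goals rfl
  have R43 : ∀ a0 a1 a2 : M, mul a0 (mul a1 (mul a0 a2)) = (mul a1 a2) := by
    intro a0 a1 a2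
    conv_rhs => rw [← R39 a0 a1 (mul a1 a2)]
    conv_rhs => enter [2, 2, 2]; rw [R36 a1 a2]
    all_goals rfl
  have R44 : ∀ a0 a1 a2 : M, mul (mul a0 (mul a1 a2)) (mul a2 a0) = a1 := by
    intro a0 a1 a2
    conv_rhs => rw [← R39 (mul a0 (mul a1 a2)) a2 a1]
    conv_rhs => enter [2, 2]; rw [R37 a0 (mul a1 a2)]
    all_goals rfl
  have R45 : ∀ a0 a1 : M, mul (mul a0 a1) (mul a1 a0) = e := by
    intro a0 a1
    conv_rhs => rw [← R44 a0 e a1]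
    conv_rhs => enter [1, 2]; rw [R34 a1]
    all_goals rfl
  have R46 : ∀ a0 a1 a2 : M, mul a0 (mul a1 (mul a2 (mul a0 a1))) = a2 := by
    intro a0 a1 a2
    conv_rhs => rw [← R37 a2 (mul a1 (mul a2 (mul a0 a1)))]
    conv_rhs => enter [1]; rw [R39 a2 a1 a0]
    all_goals rfl
  have R47 : ∀ a0 a1 a2 : M, mul a0 (mul a1 (mul a2 a0)) = (mul a1 a2) := by
    intro a0 a1 a2
    conv_lhs => rw [← R38 a1 (mul a0 (mul a1 (mul a2 a0)))]
    conv_lhs => enter [2]; rw [R39 a1 a0 a2]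
    all_goals rfl
  have R48 : ∀ a0 a1 a2 : M, mul a0 (mul (mul a0 (mul a1 a2)) a1) = a2 := by
    intro a0 a1 a2
    conv_rhs => rw [← R39 a0 (mul a0 (mul a1 a2)) a2]
    conv_rhs => enter [2, 2]; rw [R39 a0 a2 a1]
    all_goals rfl
  have R49 : ∀ a0 a1 a2 : M, mul (mul a0 a1) (mul (mul a0 a2) a1) = a2 := by
    intro a0 a1 a2
    conv_rhs => rw [← R40 a2 (mul a0 a2) a1]
    conv_rhs => enter [1, 1]; rw [R35 a2 a0]
    all_goals rfl
  have R50 : ∀ a0 a1 a2 : M, mul (mul (mul a0 a1) (mul a2 a1)) a2 = a0 := by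
    intro a0 a1 a2
    conv_rhs => rw [← R40 a0 a1 (mul a2 a1)]
    conv_rhs => enter [2]; rw [R35 a1 a2]
    all_goals rfl
  have R51 : ∀ a0 a1 a2 : M, mul (mul (mul a0 (mul a1 a2)) a1) a2 = a0 := by
    intro a0 a1 a2
    conv_rhs => rw [← R40 a0 (mul a1 a2) a1]
    conv_rhs => enter [2]; rw [R36 a1 a2]
    all_goals rfl
  have R52 : ∀ a0 a1 a2 : M, mul a0 (mul (mul a0 a1) a2) = (mul a1 a2) := by
    intro a0 a1 a2
    conv_rhs => rw [← R36 (mul (mul a0 a1) a2) (mul a1 a2)]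
    conv_rhs => enter [1]; rw [R40 a0 a1 a2]
    all_goals rfl
  have R53 : ∀ a0 a1 a2 : M, mul (mul a0 a1) (mul a2 a1) = (mul a0 a2) := by
    intro a0 a1 a2
    conv_rhs => rw [← R40 (mul a0 a2) a2 a1]
    conv_rhs => enter [1, 1]; rw [R37 a0 a2]
    all_goals rfl
  have R54 : ∀ a0 a1 a2 : M, mul (mul (mul a0 (mul a1 a2)) a2) a1 = a0 := by
    intro a0 a1 a2
    conv_rhs => rw [← R40 a0 (mul a1 a2) a2]
    conv_rhs => enter [2]; rw [R37 a1 a2]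
    all_goals rfl
  have R55 : ∀ a0 a1 a2 : M, mul (mul a0 a1) a2 = (mul a0 (mul a1 a2)) := by
    intro a0 a1 a2
    conv_lhs => rw [← R37 (mul (mul a0 a1) a2) (mul a1 a2)]
    conv_lhs => enter [1]; rw [R40 a0 a1 a2]
    all_goals rfl
  have comm : ∀ x y : M, mul x y = mul y x := by
    intro x y
    conv_lhs => rw [← R35 x y]
    exact R38 x (mul y x)
  exact ⟨fun x y z => R55 x y z, comm, fun x => R34 x, fun x => R31 x⟩
end

section
/- Let M be a type equipped with a binary operation · and a distinguished element e, and suppose that ((e·(x·y))·(z·y))·z = x holds for all x, y, z ∈ M (formula 81R2↓). Then (M, ·) is a Boolean group with identity element e: the operation · is associative and commutative, e·x = x for all x, and x·x = e for all x. -/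
theorem single_axiom_81R2down
    (M : Type) (mul : M → M → M) (e : M)
    (h : ∀ x y z : M, mul (mul (mul e (mul x y)) (mul z y)) z = x) :
    (∀ x y z : M, mul (mul x y) z = mul x (mul y z)) ∧
    (∀ x y : M, mul x y = mul y x) ∧
    (∀ x : M, mul e x = x) ∧
    (∀ x : M, mul x x = e) := by
  -- auto-generated derived equations
  have eq1 : ∀ x_a z_b z_a y_a : M, (mul (mul (mul e x_a) (mul z_b z_a)) z_b) = (mul (mul e (mul x_a y_a)) (mul z_a y_a)) := by
    intro x_a z_b z_a y_a
    have H := (h (mul (mul e (mul x_a y_a)) (mul z_a y_a)) z_a z_b)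
    rw [(h x_a y_a z_a)] at H
    exact H
  have eq2 : ∀ x_b z_a_a y_a_a : M, (mul (mul e (mul (mul x_b z_a_a) y_a_a)) (mul z_a_a y_a_a)) = x_b := by
    intro x_b z_a_a y_a_a
    have H := (h x_b z_a_a e)
    rw [(eq1 (mul x_b z_a_a) e z_a_a y_a_a)] at H
    exact H
  have eq3 : ∀ x_a z_a y_a : M, (mul (mul e x_a) (mul (mul z_a y_a) z_a)) = (mul e (mul x_a y_a)) := by
    intro x_a z_a y_a
    have H := (eq2 (mul e (mul x_a y_a)) (mul z_a y_a) z_a)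
    rw [(h x_a y_a z_a)] at H
    exact H
  have eq4 : ∀ x_b_b z_a_a y_a_a : M, (mul e (mul (mul (mul x_b_b (mul z_a_a y_a_a)) z_a_a) y_a_a)) = x_b_b := by
    intro x_b_b z_a_a y_a_a
    have H := (eq2 x_b_b (mul z_a_a y_a_a) z_a_a)
    rw [(eq3 (mul (mul x_b_b (mul z_a_a y_a_a)) z_a_a) z_a_a y_a_a)] at H
    exact H
  have eq5 : ∀ z_a : M, (mul e (mul z_a z_a)) = e := by
    intro z_a
    have H := (eq4 e (mul z_a z_a) z_a)
    rw [(h (mul z_a z_a) z_a z_a)] at H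
    exact H
  have eq6 : ∀ z_b z_a_a : M, (mul (mul e (mul z_b z_a_a)) z_b) = z_a_a := by
    intro z_b z_a_a
    have H := (h z_a_a z_a_a z_b)
    rw [(eq5 z_a_a)] at H
    exact H
  have eq7 : ∀ z_a_a : M, (mul e z_a_a) = z_a_a := by
    intro z_a_a
    have H := (eq6 z_a_a z_a_a)
    rw [(eq5 z_a_a)] at H
    exact H
  have eq8 : ∀ z_a_b : M, (mul z_a_b z_a_b) = e := by
    intro z_a_b
    have H := (eq5 z_a_b)
    rw [(eq7 (mul z_a_b z_a_b))] at H
    exact H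
  have eq9 : ∀ z_a_a_a z_b : M, (mul z_a_a_a z_b) = (mul z_b z_a_a_a) := by
    intro z_a_a_a z_b
    have H := (h (mul z_b z_a_a_a) z_a_a_a z_b)
    rw [(eq6 (mul z_b z_a_a_a) z_a_a_a)] at H
    exact H
  have eq10 : ∀ z_b_b z_a_a_b : M, (mul z_b_b (mul z_b_b z_a_a_b)) = z_a_a_b := by
    intro z_b_b z_a_a_b
    have H := (eq6 z_b_b z_a_a_b)
    rw [(eq7 (mul z_b_b z_a_a_b)), (eq9 (mul z_b_b z_a_a_b) z_b_b)] at H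
    exact H
  have eq11 : ∀ z_a_a_a_a z_b_a : M, (mul z_a_a_a_a (mul z_b_a z_a_a_a_a)) = z_b_a := by
    intro z_a_a_a_a z_b_a
    have H := (eq6 z_a_a_a_a z_b_a)
    rw [(eq9 z_a_a_a_a z_b_a), (eq9 (mul e (mul z_b_a z_a_a_a_a)) z_a_a_a_a), (eq7 (mul z_b_a z_a_a_a_a))] at H
    exact H
  have eq12 : ∀ x_b_b_a z_a_a_a y_a_a_a : M, (mul x_b_b_a (mul z_a_a_a (mul x_b_b_a (mul z_a_a_a y_a_a_a)))) = y_a_a_a := by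
    intro x_b_b_a z_a_a_a y_a_a_a
    have H := (eq6 (mul (mul x_b_b_a (mul z_a_a_a y_a_a_a)) z_a_a_a) y_a_a_a)
    rw [(eq4 x_b_b_a z_a_a_a y_a_a_a), (eq9 (mul x_b_b_a (mul z_a_a_a y_a_a_a)) z_a_a_a)] at H
    exact H
  have eq13 : ∀ z_b x_b y_b : M, (mul z_b (mul (mul x_b y_b) (mul y_b z_b))) = x_b := by
    intro z_b x_b y_b
    have H := (h x_b y_b z_b)
    rw [(eq7 (mul x_b y_b)), (eq9 (mul (mul x_b y_b) (mul z_b y_b)) z_b), (eq9 z_b y_b)] at H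
    exact H
  have eq14 : ∀ z_a_a_b y_a_a_b x_b_b : M, (mul (mul z_a_a_b y_a_a_b) (mul y_a_a_b (mul x_b_b z_a_a_b))) = x_b_b := by
    intro z_a_a_b y_a_a_b x_b_b
    have H := (eq2 x_b_b z_a_a_b y_a_a_b)
    rw [(eq7 (mul (mul x_b_b z_a_a_b) y_a_a_b)), (eq9 (mul (mul x_b_b z_a_a_b) y_a_a_b) (mul z_a_a_b y_a_a_b)), (eq9 (mul x_b_b z_a_a_b) y_a_a_b)] at H
    exact H
  have eq15 : ∀ y_a_a_b z_a_a_b x_b_b_b : M, (mul y_a_a_b (mul z_a_a_b (mul x_b_b_b (mul z_a_a_b y_a_a_b)))) = x_b_b_b := by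
    intro y_a_a_b z_a_a_b x_b_b_b
    have H := (eq4 x_b_b_b z_a_a_b y_a_a_b)
    rw [(eq7 (mul (mul (mul x_b_b_b (mul z_a_a_b y_a_a_b)) z_a_a_b) y_a_a_b)), (eq9 (mul (mul x_b_b_b (mul z_a_a_b y_a_a_b)) z_a_a_b) y_a_a_b), (eq9 (mul x_b_b_b (mul z_a_a_b y_a_a_b)) z_a_a_b)] at H
    exact H
  have eq16 : ∀ z_a_a_a_a x_b_b_a_a y_a_a_a_a : M, (mul z_a_a_a_a (mul x_b_b_a_a (mul y_a_a_a_a z_a_a_a_a))) = (mul x_b_b_a_a y_a_a_a_a) := by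
    intro z_a_a_a_a x_b_b_a_a y_a_a_a_a
    have H := (eq10 x_b_b_a_a (mul z_a_a_a_a (mul x_b_b_a_a (mul z_a_a_a_a y_a_a_a_a))))
    rw [(eq12 x_b_b_a_a z_a_a_a_a y_a_a_a_a), (eq9 z_a_a_a_a y_a_a_a_a)] at H
    exact H.symm
  have eq17 : ∀ x_b_b_a_b z_b_b_a z_a_a_b_a : M, (mul x_b_b_a_b (mul z_b_b_a (mul x_b_b_a_b z_a_a_b_a))) = (mul z_b_b_a z_a_a_b_a) := by
    intro x_b_b_a_b z_b_b_a z_a_a_b_a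
    have H := (eq12 x_b_b_a_b z_b_b_a (mul z_b_b_a z_a_a_b_a))
    rw [(eq10 z_b_b_a z_a_a_b_a)] at H
    exact H
  have eq18 : ∀ z_b_b y_b_b x_b_b : M, (mul z_b_b (mul (mul z_b_b y_b_b) (mul y_b_b x_b_b))) = x_b_b := by
    intro z_b_b y_b_b x_b_b
    have H := (eq13 z_b_b x_b_b y_b_b)
    rw [(eq9 (mul x_b_b y_b_b) (mul y_b_b z_b_b)), (eq9 y_b_b z_b_b), (eq9 x_b_b y_b_b)] at H
    exact H
  have eq19 : ∀ z_b_a y_b_a x_b_a : M, (mul (mul z_b_a y_b_a) (mul x_b_a y_b_a)) = (mul z_b_a x_b_a) := by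
    intro z_b_a y_b_a x_b_a
    have H := (eq10 z_b_a (mul (mul x_b_a y_b_a) (mul y_b_a z_b_a)))
    rw [(eq13 z_b_a x_b_a y_b_a), (eq9 y_b_a z_b_a), (eq9 (mul x_b_a y_b_a) (mul z_b_a y_b_a))] at H
    exact H.symm
  have eq20 : ∀ z_b_a_a z_a_a_a_a_a x_b_b : M, (mul (mul z_b_a_a z_a_a_a_a_a) (mul z_b_a_a (mul z_a_a_a_a_a x_b_b))) = x_b_b := by
    intro z_b_a_a z_a_a_a_a_a x_b_b
    have H := (eq13 (mul z_b_a_a z_a_a_a_a_a) x_b_b z_a_a_a_a_a)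
    rw [(eq11 z_a_a_a_a_a z_b_a_a), (eq9 (mul x_b_b z_a_a_a_a_a) z_b_a_a), (eq9 x_b_b z_a_a_a_a_a)] at H
    exact H
  have eq21 : ∀ y_a_a_b_a z_a_a_b_a x_b_b_a : M, (mul (mul y_a_a_b_a z_a_a_b_a) (mul y_a_a_b_a (mul x_b_b_a z_a_a_b_a))) = x_b_b_a := by
    intro y_a_a_b_a z_a_a_b_a x_b_b_a
    have H := (eq9 (mul z_a_a_b_a y_a_a_b_a) (mul y_a_a_b_a (mul x_b_b_a z_a_a_b_a)))
    rw [(eq14 z_a_a_b_a y_a_a_b_a x_b_b_a), (eq9 z_a_a_b_a y_a_a_b_a), (eq9 (mul y_a_a_b_a (mul x_b_b_a z_a_a_b_a)) (mul y_a_a_b_a z_a_a_b_a))] at H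
    exact H.symm
  have eq22 : ∀ z_b_a y_a_a_b_b z_a_a_a_a : M, (mul (mul z_b_a y_a_a_b_b) (mul y_a_a_b_b (mul z_b_a z_a_a_a_a))) = z_a_a_a_a := by
    intro z_b_a y_a_a_b_b z_a_a_a_a
    have H := (eq14 z_b_a y_a_a_b_b z_a_a_a_a)
    rw [(eq9 z_a_a_a_a z_b_a)] at H
    exact H
  have eq23 : ∀ x_b_b_a z_a_a_b_a y_a_a_b_a : M, (mul x_b_b_a (mul z_a_a_b_a y_a_a_b_a)) = (mul y_a_a_b_a (mul z_a_a_b_a x_b_b_a)) := by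
    intro x_b_b_a z_a_a_b_a y_a_a_b_a
    have H := (eq10 (mul z_a_a_b_a y_a_a_b_a) (mul y_a_a_b_a (mul x_b_b_a z_a_a_b_a)))
    rw [(eq14 z_a_a_b_a y_a_a_b_a x_b_b_a), (eq9 (mul z_a_a_b_a y_a_a_b_a) x_b_b_a), (eq9 x_b_b_a z_a_a_b_a)] at H
    exact H
  have eq24 : ∀ z_a_a_a_a_a x_b_b_a_a_a y_a_a_a_a_a : M, (mul z_a_a_a_a_a (mul x_b_b_a_a_a y_a_a_a_a_a)) = (mul x_b_b_a_a_a (mul z_a_a_a_a_a y_a_a_a_a_a)) := by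
    intro z_a_a_a_a_a x_b_b_a_a_a y_a_a_a_a_a
    have H := (eq10 z_a_a_a_a_a (mul x_b_b_a_a_a (mul y_a_a_a_a_a z_a_a_a_a_a)))
    rw [(eq16 z_a_a_a_a_a x_b_b_a_a_a y_a_a_a_a_a), (eq9 y_a_a_a_a_a z_a_a_a_a_a)] at H
    exact H
  exact ⟨fun x y z => by rw [(eq9 (mul x y) z), (eq23 z x y), (eq24 y x z)],
   fun x y => by rw [(eq9 y x)],
   fun x => by rw [(eq7 x)],
   fun x => by rw [(eq8 x)]⟩
end

section
/- Let M be a type equipped with a binary operation · and a distinguished element e, and suppose that ((e·(x·(y·z)))·y)·z = x holds for all x, y, z ∈ M (formula 81L3↓). Then (M, ·) is a Boolean group with identity element e: the operation · is associative and commutative, e·x = x for all x, and x·x = e for all x. -/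
theorem single_axiom_81L3down
    (M : Type) (mul : M → M → M) (e : M)
    (h : ∀ x y z : M, mul (mul (mul e (mul x (mul y z))) y) z = x) :
    (∀ x y z : M, mul (mul x y) z = mul x (mul y z)) ∧
    (∀ x y : M, mul x y = mul y x) ∧
    (∀ x : M, mul e x = x) ∧
    (∀ x : M, mul x x = e) := by
  have eq1 : ∀ a0 a1 a2 a3 : M, (mul (mul e (mul a0 (mul a2 (mul a1 a3)))) a2) = (mul (mul (mul e a0) a1) a3) := fun a0 a1 a2 a3 => ((h (mul (mul e (mul a0 (mul a2 (mul a1 a3)))) a2) a1 a3)).symm.trans ((congrArg (fun _t => mul _t a3) (congrArg (fun _t => mul _t a1) (congrArg (mul e) (h a0 a2 (mul a1 a3))))))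
  have eq2 : ∀ a0 a1 a2 : M, a0 = (mul (mul (mul (mul e a0) a1) a2) (mul a1 a2)) := fun a0 a1 a2 => ((h a0 e (mul a1 a2))).symm.trans ((congrArg (fun _t => mul _t (mul a1 a2)) (eq1 a0 a1 e a2)))
  have eq3 : ∀ a0 a1 a2 a3 : M, a0 = (mul (mul e (mul (mul a0 (mul a1 a3)) (mul a2 (mul a1 a3)))) a2) := fun a0 a1 a2 a3 => ((h a0 a1 a3)).symm.trans (((eq1 (mul a0 (mul a1 a3)) a1 a2 a3)).symm)
  have eq4 : ∀ a0 a1 a2 : M, a0 = (mul (mul e (mul (mul a0 a1) (mul a2 a1))) a2) := fun a0 a1 a2 => (((eq3 a0 (mul (mul (mul e a1) a2) e) a2 (mul a2 e))).symm).symm.trans (((congrArg (fun _t => mul _t a2) (congrArg (mul e) (congrArg (fun _t => mul _t (mul a2 (mul (mul (mul (mul e a1) a2) e) (mul a2 e)))) (congrArg (mul a0) ((eq2 a1 a2 e)).symm))))).trans (congrArg (fun _t => mul _t a2) (congrArg (mul e) (congrArg (mul (mul a0 a1)) (congrArg (mul a2) ((eq2 a1 a2 e)).symm)))))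
  have eq5 : ∀ a0 a1 a2 : M, (mul e (mul a0 (mul a1 (mul a2 a1)))) = (mul (mul e a0) a2) := fun a0 a1 a2 => (((eq4 (mul e (mul a0 (mul a1 (mul a2 a1)))) a1 a2)).symm).symm.trans ((congrArg (fun _t => mul _t a2) (congrArg (mul e) (h a0 a1 (mul a2 a1)))))
  have eq6 : ∀ a0 a1 a2 a3 : M, (mul (mul a0 a1) (mul a2 a1)) = (mul (mul a0 a3) (mul a2 a3)) := fun a0 a1 a2 a3 => (((eq2 (mul (mul a0 a1) (mul a2 a1)) a2 a3)).symm).symm.trans ((congrArg (fun _t => mul _t (mul a2 a3)) (congrArg (fun _t => mul _t a3) ((eq4 a0 a1 a2)).symm)))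
  have eq7 : ∀ a0 a1 a2 : M, e = (mul (mul (mul e (mul (mul e a0) a2)) a0) (mul a1 (mul a2 a1))) := fun a0 a1 a2 => ((h e a0 (mul a1 (mul a2 a1)))).symm.trans ((congrArg (fun _t => mul _t (mul a1 (mul a2 a1))) (congrArg (fun _t => mul _t a0) (congrArg (mul e) (eq5 a0 a1 a2)))))
  have eq8 : ∀ a0 a1 : M, (mul e (mul (mul e (mul a1 a0)) a1)) = (mul (mul e e) a0) := fun a0 a1 => (((eq3 (mul e (mul (mul e (mul a1 a0)) a1)) a1 a0 a0)).symm).symm.trans ((congrArg (fun _t => mul _t a0) (congrArg (mul e) ((eq7 (mul a1 a0) a0 a1)).symm)))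
  have eq9 : ∀ a0 a1 : M, (mul (mul e e) (mul (mul a0 a1) a1)) = (mul e a0) := fun a0 a1 => ((eq8 (mul (mul a0 a1) a1) (mul a0 a1))).symm.trans (((congrArg (mul e) (congrArg (fun _t => mul _t (mul a0 a1)) (congrArg (mul e) (eq6 a0 a1 (mul a0 a1) e))))).trans (congrArg (mul e) ((eq4 a0 e (mul a0 a1))).symm))
  have eq10 : e = (mul (mul e (mul e e)) (mul e e)) := (((eq4 e e (mul e e))).symm).symm.trans ((congrArg (fun _t => mul _t (mul e e)) (congrArg (mul e) (eq9 e e))))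
  have eq11 : (mul e e) = (mul (mul e e) e) := ((eq9 e (mul e e))).symm.trans ((congrArg (mul (mul e e)) ((eq10)).symm))
  have eq12 : (mul e e) = e := (((eq4 (mul e e) e e)).symm).symm.trans (((congrArg (fun _t => mul _t e) (congrArg (mul e) (congrArg (fun _t => mul _t (mul e e)) ((eq11)).symm)))).trans ((eq4 e e e)).symm)
  have eq13 : ∀ a0 : M, e = (mul (mul e a0) (mul e a0)) := fun a0 => ((((eq2 e e a0)).symm).symm.trans ((congrArg (fun _t => mul _t (mul e a0)) (congrArg (fun _t => mul _t a0) ((eq11)).symm)))).trans ((congrArg (fun _t => mul _t (mul e a0)) (congrArg (fun _t => mul _t a0) (eq12))))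
  have eq14 : ∀ a0 : M, a0 = (mul (mul (mul e (mul a0 e)) e) e) := fun a0 => ((h a0 e e)).symm.trans ((congrArg (fun _t => mul _t e) (congrArg (fun _t => mul _t e) (congrArg (mul e) (congrArg (mul a0) (eq12))))))
  have eq15 : ∀ a0 a1 : M, e = (mul (mul (mul e a0) a1) (mul a0 a1)) := fun a0 a1 => (((eq2 e a0 a1)).symm).symm.trans ((congrArg (fun _t => mul _t (mul a0 a1)) (congrArg (fun _t => mul _t a1) (congrArg (fun _t => mul _t a0) (eq12)))))
  have eq16 : ∀ a0 a1 : M, a0 = (mul e (mul a1 (mul a0 a1))) := fun a0 a1 => (((eq2 a0 a1 (mul a0 a1))).symm).symm.trans ((congrArg (fun _t => mul _t (mul a1 (mul a0 a1))) ((eq15 a0 a1)).symm))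
  have eq17 : ∀ a0 : M, e = (mul a0 a0) := fun a0 => (((eq13 (mul e (mul a0 e)))).symm).symm.trans (((congrArg (fun _t => mul _t (mul e (mul e (mul a0 e)))) ((eq16 a0 e)).symm)).trans (congrArg (mul a0) ((eq16 a0 e)).symm))
  have eq18 : ∀ a0 : M, a0 = (mul e a0) := fun a0 => (((eq2 a0 e (mul (mul e a0) e))).symm).symm.trans (((congrArg (fun _t => mul _t (mul e (mul (mul e a0) e))) ((eq17 (mul (mul e a0) e))).symm)).trans ((eq16 (mul e a0) e)).symm)
  have eq19 : ∀ a0 : M, a0 = (mul a0 e) := fun a0 => ((((eq8 a0 e)).trans (congrArg (fun _t => mul _t a0) (eq12))).trans ((eq18 a0)).symm).symm.trans ((((congrArg (mul e) (congrArg (fun _t => mul _t e) (congrArg (mul e) ((eq18 a0)).symm)))).trans ((eq18 (mul (mul e a0) e))).symm).trans (congrArg (fun _t => mul _t e) ((eq18 a0)).symm))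
  have eq20 : ∀ a0 a1 : M, (mul (mul a1 a0) a1) = a0 := fun a0 a1 => ((((eq18 (mul (mul e (mul a1 a0)) a1))).symm).trans (congrArg (fun _t => mul _t a1) ((eq18 (mul a1 a0))).symm)).symm.trans ((((eq8 a0 a1)).trans (congrArg (fun _t => mul _t a0) (eq12))).trans ((eq18 a0)).symm)
  have eq21 : ∀ a0 a1 : M, a0 = (mul (mul a0 a1) a1) := fun a0 a1 => (((eq9 a0 a1)).trans ((eq18 a0)).symm).symm.trans (((congrArg (fun _t => mul _t (mul (mul a0 a1) a1)) ((eq18 e)).symm)).trans ((eq18 (mul (mul a0 a1) a1))).symm)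
  have eq22 : ∀ a0 a1 : M, (mul a1 (mul a0 a1)) = a0 := fun a0 a1 => (((eq18 (mul a1 (mul a0 a1)))).symm).symm.trans (((eq16 a0 a1)).symm)
  have eq23 : ∀ a0 a1 : M, (mul a1 a0) = (mul a0 a1) := fun a0 a1 => (((((eq6 a0 a0 a1 e)).symm).trans (congrArg (fun _t => mul _t (mul a1 a0)) ((eq17 a0)).symm)).trans ((eq18 (mul a1 a0))).symm).symm.trans (((congrArg (fun _t => mul _t (mul a1 e)) ((eq19 a0)).symm)).trans (congrArg (mul a0) ((eq19 a1)).symm))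
  have eq24 : ∀ a0 a1 : M, a0 = (mul a1 (mul a1 a0)) := fun a0 a1 => (((eq2 a0 a1 (mul e a0))).symm).symm.trans (((congrArg (fun _t => mul _t (mul a1 (mul e a0))) (eq20 a1 (mul e a0)))).trans (congrArg (mul a1) (congrArg (mul a1) ((eq18 a0)).symm)))
  have eq25 : ∀ a0 a1 : M, e = (mul (mul a0 a1) (mul a1 a0)) := fun a0 a1 => (((eq7 e a1 (mul a0 a1))).symm).symm.trans (((((congrArg (mul (mul (mul e (mul (mul e e) (mul a0 a1))) e)) (congrArg (mul a1) ((eq21 a0 a1)).symm))).trans (congrArg (fun _t => mul _t (mul a1 a0)) (congrArg (fun _t => mul _t e) ((eq18 (mul (mul e e) (mul a0 a1)))).symm))).trans (congrArg (fun _t => mul _t (mul a1 a0)) (congrArg (fun _t => mul _t e) (congrArg (fun _t => mul _t (mul a0 a1)) ((eq18 e)).symm)))).trans (congrArg (fun _t => mul _t (mul a1 a0)) (eq20 (mul a0 a1) e)))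
  have eq26 : ∀ a0 a1 a2 : M, a0 = (mul a2 (mul a1 (mul a0 (mul a1 a2)))) := fun a0 a1 a2 => (((h a0 a1 a2)).symm.trans ((congrArg (fun _t => mul _t a2) (congrArg (fun _t => mul _t a1) ((eq18 (mul a0 (mul a1 a2)))).symm)))).trans (((eq23 a2 (mul (mul a0 (mul a1 a2)) a1))).trans (congrArg (mul a2) (eq23 a1 (mul a0 (mul a1 a2)))))
  have eq27 : ∀ a0 a1 a2 : M, a0 = (mul (mul a1 a2) (mul (mul a0 a1) a2)) := fun a0 a1 a2 => ((((eq2 a0 a1 a2)).symm).symm.trans ((congrArg (fun _t => mul _t (mul a1 a2)) (congrArg (fun _t => mul _t a2) (congrArg (fun _t => mul _t a1) ((eq18 a0)).symm))))).trans ((eq23 (mul a1 a2) (mul (mul a0 a1) a2)))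
  have eq28 : ∀ a0 a1 a2 : M, a0 = (mul a2 (mul (mul a0 a1) (mul a2 a1))) := fun a0 a1 a2 => ((((eq3 a0 e a2 a1)).symm).symm.trans ((((congrArg (fun _t => mul _t a2) (congrArg (mul e) (congrArg (fun _t => mul _t (mul a2 (mul e a1))) (congrArg (mul a0) ((eq18 a1)).symm))))).trans (congrArg (fun _t => mul _t a2) ((eq18 (mul (mul a0 a1) (mul a2 (mul e a1))))).symm)).trans (congrArg (fun _t => mul _t a2) (congrArg (mul (mul a0 a1)) (congrArg (mul a2) ((eq18 a1)).symm))))).trans ((eq23 a2 (mul (mul a0 a1) (mul a2 a1))))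
  have eq29 : ∀ a0 a1 a2 : M, (mul a0 (mul a1 a2)) = (mul (mul a0 a1) a2) := fun a0 a1 a2 => (((((eq19 (mul e (mul a0 (mul e (mul a1 a2)))))).symm).trans ((eq18 (mul a0 (mul e (mul a1 a2))))).symm).trans (congrArg (mul a0) ((eq18 (mul a1 a2))).symm)).symm.trans (((eq1 a0 a1 e a2)).trans (congrArg (fun _t => mul _t a2) (congrArg (fun _t => mul _t a1) ((eq18 a0)).symm)))
  have eq30 : ∀ a0 a1 a2 : M, (mul a0 a1) = (mul a2 (mul a0 (mul a2 a1))) := fun a0 a1 a2 => (((((eq19 (mul (mul e a0) a1))).symm).trans (congrArg (fun _t => mul _t a1) ((eq18 a0)).symm)).symm.trans (((((eq1 a0 a1 a2 e)).symm).trans (congrArg (fun _t => mul _t a2) ((eq18 (mul a0 (mul a2 (mul a1 e))))).symm)).trans (congrArg (fun _t => mul _t a2) (congrArg (mul a0) (congrArg (mul a2) ((eq19 a1)).symm))))).trans ((eq23 a2 (mul a0 (mul a2 a1))))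
  have eq31 : ∀ a0 a1 a2 : M, (mul a0 (mul a2 a1)) = (mul a1 (mul a0 a2)) := fun a0 a1 a2 => ((((eq29 a0 a2 a1)).symm).symm.trans (((h (mul (mul a0 a2) a1) a0 a2)).symm.trans (((congrArg (fun _t => mul _t a2) (congrArg (fun _t => mul _t a0) (congrArg (mul e) (eq20 a1 (mul a0 a2)))))).trans (congrArg (fun _t => mul _t a2) (congrArg (fun _t => mul _t a0) ((eq18 a1)).symm))))).trans (((eq29 a1 a0 a2)).symm)
  exact ⟨fun x y z => (((eq23 z (mul x y))).trans (eq31 z y x)).trans (eq31 y x z), fun x y => ((eq23 x y)).symm, fun x => ((eq18 x)).symm, fun x => ((eq17 x)).symm⟩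
end

section
/- Let M be a type equipped with a binary operation · and a distinguished element e, and suppose that e·(((x·(y·z))·z)·y) = x holds for all x, y, z ∈ M (formula 81R3↓). Then (M, ·) is a Boolean group with identity element e: the operation · is associative and commutative, e·x = x for all x, and x·x = e for all x. -/
theorem single_axiom_81R3down
    (M : Type) (mul : M → M → M) (e : M)
    (h : ∀ x y z : M, mul e (mul (mul (mul x (mul y z)) z) y) = x) :
    (∀ x y z : M, mul (mul x y) z = mul x (mul y z)) ∧
    (∀ x y : M, mul x y = mul y x) ∧
    (∀ x : M, mul e x = x) ∧
    (∀ x : M, mul x x = e) := by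
  have e1 : ∀ x0 x1 x2 : M, (mul e (mul (mul x0 x1) (mul (mul x0 (mul x1 x2)) x2))) = e := by
    intro x0 x1 x2
    have hb := h e (mul (mul x0 (mul x1 x2)) x2) x1
    rw [h x0 x1 x2] at hb
    exact hb
  have e3 : ∀ x0 x1 x2 : M, (mul e (mul (mul e (mul (mul x0 (mul x1 x2)) x2)) (mul x0 x1))) = e := by
    intro x0 x1 x2
    have hb := h e (mul x0 x1) (mul (mul x0 (mul x1 x2)) x2)
    rw [e1 x0 x1 x2] at hb
    exact hb
  have e11 : ∀ x0 x1 x2 : M, (mul e (mul x0 (mul (mul x0 (mul x1 (mul x2 x1))) x2))) = e := by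
    intro x0 x1 x2
    have hb := e3 (mul x0 (mul x1 (mul x2 x1))) x2 x1
    rw [h x0 x1 (mul x2 x1)] at hb
    exact hb
  have e23 : ∀ x0 x1 x2 : M, (mul e (mul (mul e (mul (mul x0 (mul x1 (mul x2 x1))) x2)) x0)) = e := by
    intro x0 x1 x2
    have hb := h e x0 (mul (mul x0 (mul x1 (mul x2 x1))) x2)
    rw [e11 x0 x1 x2] at hb
    exact hb
  have e25 : ∀ x0 x1 x2 : M, (mul e (mul x0 (mul (mul x0 x1) (mul (mul x1 (mul e x2)) x2)))) = e := by
    intro x0 x1 x2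
    have hb := e11 x0 e (mul (mul x1 (mul e x2)) x2)
    rw [h x1 e x2] at hb
    exact hb
  have e52 : ∀ x0 x1 x2 : M, (mul e (mul x0 (mul x0 (mul x1 (mul x2 (mul x1 x2)))))) = e := by
    intro x0 x1 x2
    have hb := e23 (mul x0 (mul x1 (mul x2 (mul x1 x2)))) x2 x1
    rw [h x0 x1 (mul x2 (mul x1 x2))] at hb
    exact hb
  have e96 : (mul e e) = e := by
    have hb := e25 e e e
    rw [e1 e e e] at hb
    exact hb
  have e121 : ∀ x0 : M, (mul e (mul (mul (mul x0 e) e) e)) = x0 := by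
    intro x0
    have hb := h x0 e e
    rw [e96] at hb
    exact hb
  have e129 : ∀ x0 : M, (mul e (mul x0 (mul x0 (mul e (mul e e))))) = e := by
    intro x0
    have hb := e52 x0 e e
    rw [e96] at hb
    exact hb
  have e211 : ∀ x0 : M, (mul e (mul x0 (mul x0 e))) = e := by
    intro x0
    have hb := e129 x0
    rw [e96] at hb
    rw [e96] at hb
    exact hb
  have e213 : ∀ x0 x1 : M, (mul e (mul (mul (mul x0 e) (mul x1 (mul x1 e))) e)) = x0 := by
    intro x0 x1
    have hb := h x0 e (mul x1 (mul x1 e))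
    rw [e211 x1] at hb
    exact hb
  have e215 : ∀ x0 : M, (mul e (mul (mul e x0) (mul e (mul x0 e)))) = e := by
    intro x0
    have hb := e1 e x0 (mul x0 e)
    rw [e211 x0] at hb
    exact hb
  have e266 : ∀ x0 x1 : M, (mul e (mul (mul e (mul (mul x0 (mul e x1)) x1)) x0)) = e := by
    intro x0 x1
    have hb := e215 (mul (mul x0 (mul e x1)) x1)
    rw [h x0 e x1] at hb
    exact hb
  have e562 : ∀ x0 x1 : M, (mul e (mul x0 (mul x0 (mul x1 (mul e x1))))) = e := by
    intro x0 x1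
    have hb := e266 (mul x0 (mul x1 (mul e x1))) x1
    rw [h x0 x1 (mul e x1)] at hb
    exact hb
  have e604 : ∀ x0 x1 : M, (mul e (mul (mul e (mul x0 (mul x1 (mul e x1)))) x0)) = e := by
    intro x0 x1
    have hb := h e x0 (mul x0 (mul x1 (mul e x1)))
    rw [e562 x0 x1] at hb
    exact hb
  have e739 : ∀ x0 : M, (mul e (mul e (mul x0 (mul e x0)))) = e := by
    intro x0
    have hb := e604 (mul x0 (mul e x0)) (mul x0 (mul e x0))
    rw [e52 (mul x0 (mul e x0)) e x0] at hb
    exact hb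
  have e749 : ∀ x0 x1 : M, (mul e (mul (mul e (mul x0 (mul (mul x1 (mul x1 e)) e))) x0)) = e := by
    intro x0 x1
    have hb := e604 x0 (mul x1 (mul x1 e))
    rw [e211 x1] at hb
    exact hb
  have e782 : ∀ x0 x1 x2 : M, (mul e (mul e (mul (mul (mul (mul x0 (mul x1 x2)) x2) x1) x0))) = e := by
    intro x0 x1 x2
    have hb := e739 (mul (mul (mul x0 (mul x1 x2)) x2) x1)
    rw [h x0 x1 x2] at hb
    exact hb
  have e3012 : ∀ x0 : M, (mul e (mul e (mul x0 x0))) = e := by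
    intro x0
    have hb := e749 (mul x0 x0) x0
    rw [e1 x0 x0 e] at hb
    exact hb
  have e3483 : ∀ x0 x1 : M, (mul e (mul x0 (mul x1 (mul x0 x1)))) = e := by
    intro x0 x1
    have hb := e782 x0 x1 (mul x0 x1)
    rw [h (mul x0 (mul x1 (mul x0 x1))) x0 x1] at hb
    exact hb
  have e3653 : ∀ x0 x1 : M, (mul e (mul (mul e (mul x0 (mul x1 x0))) x1)) = e := by
    intro x0 x1
    have hb := h e x1 (mul x0 (mul x1 x0))
    rw [e3483 x1 x0] at hb
    exact hb
  have e3655 : ∀ x0 x1 : M, (mul e (mul (mul (mul x0 (mul e x1)) x1) x0)) = e := by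
    intro x0 x1
    have hb := e3483 (mul (mul x0 (mul e x1)) x1) e
    rw [h x0 e x1] at hb
    exact hb
  have e3668 : ∀ x0 : M, (mul e (mul (mul (mul x0 e) e) x0)) = e := by
    intro x0
    have hb := e3483 (mul (mul x0 e) e) e
    rw [e121 x0] at hb
    exact hb
  have e3747 : ∀ x0 x1 : M, (mul e (mul (mul e x0) (mul (mul x0 (mul e x1)) x1))) = e := by
    intro x0 x1
    have hb := e3653 e (mul (mul x0 (mul e x1)) x1)
    rw [h x0 e x1] at hb
    exact hb
  have e3852 : ∀ x0 : M, (mul e (mul e (mul x0 (mul e (mul e x0))))) = e := by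
    intro x0
    have hb := e266 (mul x0 (mul e (mul e x0))) x0
    rw [e3655 x0 (mul e x0)] at hb
    exact hb
  have e4208 : ∀ x0 : M, (mul e (mul e (mul (mul x0 x0) e))) = e := by
    intro x0
    have hb := e3852 (mul x0 x0)
    rw [e3012 x0] at hb
    exact hb
  have e4278 : ∀ x0 : M, (mul e (mul e (mul (mul (mul x0 x0) e) e))) = e := by
    intro x0
    have hb := e3852 (mul (mul x0 x0) e)
    rw [e4208 x0] at hb
    exact hb
  have e4367 : ∀ x0 : M, (mul e (mul e (mul (mul (mul (mul x0 x0) e) e) e))) = e := by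
    intro x0
    have hb := e3852 (mul (mul (mul x0 x0) e) e)
    rw [e4278 x0] at hb
    exact hb
  have e6212 : ∀ x0 : M, (mul e (mul x0 x0)) = e := by
    intro x0
    have hb := e4367 x0
    rw [e121 (mul x0 x0)] at hb
    exact hb
  have e6214 : ∀ x0 x1 : M, (mul e (mul (mul (mul x0 e) (mul x1 x1)) e)) = x0 := by
    intro x0 x1
    have hb := h x0 e (mul x1 x1)
    rw [e6212 x1] at hb
    exact hb
  have e6245 : ∀ x0 x1 : M, (mul e (mul e (mul (mul (mul x0 x0) (mul e x1)) x1))) = e := by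
    intro x0 x1
    have hb := e3747 (mul x0 x0) x1
    rw [e6212 x0] at hb
    exact hb
  have e7738 : ∀ x0 : M, (mul e (mul x0 (mul e x0))) = e := by
    intro x0
    have hb := e6245 (mul x0 (mul e x0)) x0
    rw [h (mul x0 (mul e x0)) x0 (mul e x0)] at hb
    exact hb
  have e8005 : ∀ x0 : M, (mul e (mul (mul (mul (mul x0 e) e) x0) e)) = e := by
    intro x0
    have hb := e7738 (mul (mul (mul x0 e) e) x0)
    rw [e3668 x0] at hb
    exact hb
  have e8638 : ∀ x0 : M, (mul (mul x0 (mul x0 e)) e) = e := by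
    intro x0
    have hb := e213 (mul (mul x0 (mul x0 e)) e) x0
    rw [e8005 (mul x0 (mul x0 e))] at hb
    exact hb.symm
  have e8678 : ∀ x0 : M, (mul (mul x0 x0) e) = e := by
    intro x0
    have hb := e6214 (mul (mul x0 x0) e) x0
    rw [e8005 (mul x0 x0)] at hb
    exact hb.symm
  have e8683 : ∀ x0 : M, (mul e (mul e x0)) = (mul x0 e) := by
    intro x0
    have hb := h (mul x0 e) x0 e
    rw [e8678 (mul x0 e)] at hb
    exact hb
  have e8741 : ∀ x0 : M, (mul e (mul e x0)) = x0 := by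
    intro x0
    have hb := h x0 x0 e
    rw [e8638 x0] at hb
    exact hb
  have e8927 : ∀ x0 : M, (mul x0 x0) = e := by
    intro x0
    have hb := e3012 x0
    rw [e8741 (mul x0 x0)] at hb
    exact hb
  have e9029 : ∀ x0 x1 : M, (mul e (mul (mul e x0) x1)) = (mul x1 x0) := by
    intro x0 x1
    have hb := h (mul x1 x0) x1 x0
    rw [e8927 (mul x1 x0)] at hb
    exact hb
  have e9338 : ∀ x0 : M, (mul x0 e) = x0 := by
    intro x0
    have hb := e8683 x0
    rw [e8741 x0] at hb
    exact hb.symm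
  have e9348 : ∀ x0 : M, (mul e (mul (mul x0 e) e)) = x0 := by
    intro x0
    have hb := e121 x0
    rw [e9338 (mul (mul x0 e) e)] at hb
    exact hb
  have e9389 : ∀ x0 : M, (mul e x0) = x0 := by
    intro x0
    have hb := e9348 x0
    rw [e9338 (mul x0 e)] at hb
    rw [e9338 x0] at hb
    exact hb
  have e9787 : ∀ x0 x1 : M, (mul x0 x1) = (mul x1 x0) := by
    intro x0 x1
    have hb := e9029 x0 x1
    rw [e9389 (mul (mul e x0) x1)] at hb
    rw [e9389 x0] at hb
    exact hb
  have hR : ∀ a b c : M, mul (mul (mul a (mul b c)) c) b = a := by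
    intro a b c
    have hb := h a b c
    rw [e9389 (mul (mul (mul a (mul b c)) c) b)] at hb
    exact hb
  have hS : ∀ u a b : M, mul (mul u a) b = mul (mul u b) a := by
    intro u a b
    have hq := hR u (mul b a) e
    rw [← hq]
    have h1 := hR (mul (mul u (mul (mul b a) e)) e) b a
    have h2 := hR (mul (mul u (mul (mul b a) e)) e) a b
    rw [e9787 a b] at h2
    rw [h1, h2]
  refine ⟨?_, ?_, ?_, ?_⟩
  · intro x y z
    rw [e9787 x (mul y z), hS y z x, e9787 y x]
  · intro x y
    exact e9787 x y
  · intro x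
    exact e9389 x
  · intro x
    exact e8927 x
end

section
/- Let M be a FINITE type equipped with a binary operation · and a distinguished element e, and suppose that (((e·x)·(y·z))·y)·z = x holds for all x, y, z ∈ M (formula 81L2). Then (M, ·) is a Boolean group with identity element e: the operation · is associative and commutative, e·x = x for all x, and x·x = e for all x. -/
/-!
In a finite model the law makes `x ↦ e·x` and every right translation `w ↦ w·z` bijective, so
they are permutations `L` and `R z`, and the law reads `R z * R y * R (y·z) * L = 1` in
`Equiv.Perm M`. Since `R a e = e·a`, the map `R` is injective and identities between the `R a`
can be pulled back to `M`. Comparing the law at `(e, w)` and `(y, e)` with `e·w = y·e` exhibits a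
left identity, which the instances `(s, s)` and `(e, s)` of the law force to be `e`. Then `L = 1`,
each `R z` is an involution and `R` is a homomorphism, which gives the Boolean group laws.
-/

open Function

theorem injective_mul_left_of_81L2 {M : Type*} {mul : M → M → M} {e : M}
    (h : ∀ x y z : M, mul (mul (mul (mul e x) (mul y z)) y) z = x) : Injective (mul e) := by
  intro a b hab
  rw [← h a e e, hab, h b e e]

theorem surjective_mul_right_of_81L2 {M : Type*} {mul : M → M → M} {e : M}
    (h : ∀ x y z : M, mul (mul (mul (mul e x) (mul y z)) y) z = x) (z : M) :
    Surjective (fun w => mul w z) :=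
  fun x => ⟨mul (mul (mul e x) (mul e z)) e, h x e z⟩

structure Perms81L2 {M : Type*} (mul : M → M → M) (e : M) where
  R : M → Equiv.Perm M
  L : Equiv.Perm M
  R_apply : ∀ a w, R a w = mul w a
  L_apply : ∀ w, L w = mul e w
  law : ∀ y z, R z * R y * R (mul y z) * L = 1

namespace Perms81L2

variable {M : Type*} {mul : M → M → M} {e : M}

noncomputable def ofFinite [Finite M]
    (h : ∀ x y z : M, mul (mul (mul (mul e x) (mul y z)) y) z = x) : Perms81L2 mul e where
  R z := Equiv.ofBijective (fun w => mul w z)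
    ⟨Finite.injective_iff_surjective.mpr (surjective_mul_right_of_81L2 h z),
      surjective_mul_right_of_81L2 h z⟩
  L := Equiv.ofBijective (mul e)
    ⟨injective_mul_left_of_81L2 h,
      Finite.injective_iff_surjective.mp (injective_mul_left_of_81L2 h)⟩
  R_apply _ _ := rfl
  L_apply _ := rfl
  law y z := Equiv.ext fun x => h x y z

theorem law_apply (P : Perms81L2 mul e) (x y z : M) :
    mul (mul (mul (mul e x) (mul y z)) y) z = x := by
  simpa only [Equiv.Perm.mul_apply, Equiv.Perm.one_apply, P.R_apply, P.L_apply] using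
    DFunLike.congr_fun (P.law y z) x

theorem R_mul_eq_inv (P : Perms81L2 mul e) (y z : M) :
    P.R (mul y z) = (P.R y)⁻¹ * (P.R z)⁻¹ * P.L⁻¹ :=
  calc P.R (mul y z)
      = (P.R y)⁻¹ * (P.R z)⁻¹ * (P.R z * P.R y * P.R (mul y z) * P.L) * P.L⁻¹ := by group
    _ = (P.R y)⁻¹ * (P.R z)⁻¹ * P.L⁻¹ := by rw [P.law, mul_one]

theorem R_apply_e (P : Perms81L2 mul e) (a : M) : P.R a e = P.L a := by
  rw [P.R_apply, P.L_apply]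

theorem R_injective (P : Perms81L2 mul e) : Injective P.R :=
  fun a b hab => P.L.injective (by rw [← P.R_apply_e, ← P.R_apply_e, hab])

/-- The left identity is `s = (R e)⁻¹ e`: if `e·w = y·e` then `R w` is the conjugate of `R y`
by `R e`, and evaluating at `e` gives `y·e = (s·y)·e`. -/
theorem exists_left_identity (P : Perms81L2 mul e) : ∃ s, ∀ y, mul s y = y := by
  refine ⟨(P.R e)⁻¹ e, fun y => ?_⟩
  set w := P.L.symm (mul y e)
  have hw : mul e w = mul y e := by
    rw [← P.L_apply, Equiv.apply_symm_apply]
  have hconj : P.R w = P.R e * P.R y * (P.R e)⁻¹ := by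
    have hRw := P.R_mul_eq_inv e w
    rw [hw, P.R_mul_eq_inv, mul_left_inj] at hRw
    calc P.R w = ((P.R e)⁻¹ * (P.R w)⁻¹)⁻¹ * (P.R e)⁻¹ := by group
      _ = P.R e * P.R y * (P.R e)⁻¹ := by rw [← hRw]; group
  have hconj_e := DFunLike.congr_fun hconj e
  rw [P.R_apply_e, P.L_apply, hw, Equiv.Perm.mul_apply, Equiv.Perm.mul_apply, P.R_apply,
    P.R_apply] at hconj_e
  exact (P.R e).injective (by rw [P.R_apply, P.R_apply, hconj_e])

theorem eq_e_of_left_identity (P : Perms81L2 mul e) {s : M} (hs : ∀ y, mul s y = y) :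
    s = e := by
  have hss : mul s s = s := hs s
  have hes : mul e s = s := by
    have hx := P.law_apply (P.L.symm s) s s
    rw [← P.L_apply, Equiv.apply_symm_apply, hss, hss, hss, hss] at hx
    rw [← P.L_apply]
    exact (P.L.symm_apply_eq.mp hx.symm).symm
  have hRR : P.R s * P.R e * P.R s * P.L = P.R s * P.R s * P.R s * P.L := by
    have hes_law := P.law e s
    have hss_law := P.law s s
    rw [hes] at hes_law
    rw [hss] at hss_law
    rw [hes_law, hss_law]
  simp only [mul_left_inj, mul_right_inj] at hRR
  exact (P.R_injective hRR).symm

theorem e_mul (P : Perms81L2 mul e) (y : M) : mul e y = y := by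
  obtain ⟨s, hs⟩ := P.exists_left_identity
  exact P.eq_e_of_left_identity hs ▸ hs y

theorem L_eq_one (P : Perms81L2 mul e) : P.L = 1 :=
  Equiv.ext fun x => by rw [P.L_apply, P.e_mul, Equiv.Perm.one_apply]

theorem R_mul_R_e_mul_R (P : Perms81L2 mul e) (z : M) : P.R z * P.R e * P.R z = 1 := by
  simpa only [P.e_mul, P.L_eq_one, mul_one] using P.law e z

theorem mul_self (P : Perms81L2 mul e) (y : M) : mul y y = e := by
  apply P.R_injective
  calc P.R (mul y y) = (P.R y)⁻¹ * (P.R y)⁻¹ := by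
        rw [P.R_mul_eq_inv, P.L_eq_one, inv_one, mul_one]
    _ = (P.R y)⁻¹ * (P.R y * P.R e * P.R y) * (P.R y)⁻¹ := by rw [P.R_mul_R_e_mul_R, mul_one]
    _ = P.R e := by group

theorem mul_e (P : Perms81L2 mul e) (z : M) : mul z e = z := by
  have hz := DFunLike.congr_fun (P.R_mul_R_e_mul_R z) e
  rw [Equiv.Perm.mul_apply, Equiv.Perm.mul_apply, P.R_apply, P.R_apply, P.R_apply, P.e_mul,
    Equiv.Perm.one_apply] at hz
  exact (P.R z).injective (by rw [P.R_apply, P.R_apply, hz, P.mul_self])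

theorem R_e (P : Perms81L2 mul e) : P.R e = 1 :=
  Equiv.ext fun z => by rw [P.R_apply, P.mul_e, Equiv.Perm.one_apply]

theorem R_mul (P : Perms81L2 mul e) (y z : M) : P.R (mul y z) = P.R y * P.R z := by
  have hinv (a : M) : (P.R a)⁻¹ = P.R a :=
    inv_eq_of_mul_eq_one_right (by simpa only [P.R_e, mul_one] using P.R_mul_R_e_mul_R a)
  rw [P.R_mul_eq_inv, P.L_eq_one, inv_one, mul_one, hinv, hinv]

theorem mul_comm (P : Perms81L2 mul e) (y z : M) : mul y z = mul z y := by
  have h := DFunLike.congr_fun (P.R_mul y z) e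
  rwa [Equiv.Perm.mul_apply, P.R_apply, P.R_apply, P.R_apply, P.e_mul, P.e_mul] at h

theorem mul_assoc (P : Perms81L2 mul e) (x y z : M) : mul (mul x y) z = mul x (mul y z) :=
  P.R_injective (by simp only [P.R_mul, _root_.mul_assoc])

end Perms81L2

theorem finite_single_axiom_81L2
    (M : Type) [Finite M] (mul : M → M → M) (e : M)
    (h : ∀ x y z : M, mul (mul (mul (mul e x) (mul y z)) y) z = x) :
    (∀ x y z : M, mul (mul x y) z = mul x (mul y z)) ∧
    (∀ x y : M, mul x y = mul y x) ∧
    (∀ x : M, mul e x = x) ∧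
    (∀ x : M, mul x x = e) := by
  let P := Perms81L2.ofFinite h
  exact ⟨P.mul_assoc, P.mul_comm, P.e_mul, P.mul_self⟩
end

section
/- Let M be a FINITE type equipped with a binary operation · and a distinguished element e, and suppose that (((e·x)·y)·z)·(y·z) = x holds for all x, y, z ∈ M (formula 81M2). Then (M, ·) is a Boolean group with identity element e: the operation · is associative and commutative, e·x = x for all x, and x·x = e for all x. -/
theorem finite_single_axiom_81M2
    (M : Type) [Finite M] (mul : M → M → M) (e : M)
    (h : ∀ x y z : M, mul (mul (mul (mul e x) y) z) (mul y z) = x) :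
    (∀ x y z : M, mul (mul x y) z = mul x (mul y z)) ∧
    (∀ x y : M, mul x y = mul y x) ∧
    (∀ x : M, mul e x = x) ∧
    (∀ x : M, mul x x = e) := by
  -- L(x) = mul e x is injective, hence surjective
  have Linj : Function.Injective (fun x : M => mul e x) := by
    intro a b hab
    have hab : mul e a = mul e b := hab
    calc a = mul (mul (mul (mul e a) e) e) (mul e e) := (h a e e).symm
    _ = mul (mul (mul (mul e b) e) e) (mul e e) := by rw [hab]
    _ = b := h b e e
  have Lsurj : Function.Surjective (fun x : M => mul e x) :=
    Finite.injective_iff_surjective.mp Linj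
  -- g_y(x) = mul (mul e x) y is injective, hence surjective
  have gsurj : ∀ y : M, Function.Surjective (fun x : M => mul (mul e x) y) := by
    intro y
    apply Finite.injective_iff_surjective.mp
    intro a b hab
    have hab : mul (mul e a) y = mul (mul e b) y := hab
    calc a = mul (mul (mul (mul e a) y) e) (mul y e) := (h a y e).symm
    _ = mul (mul (mul (mul e b) y) e) (mul y e) := by rw [hab]
    _ = b := h b y e
  have Rsurj : ∀ y t : M, ∃ u, mul u y = t := by
    intro y t
    obtain ⟨x, hx⟩ := gsurj y t
    exact ⟨mul e x, hx⟩
  have Rinj : ∀ y : M, Function.Injective (fun u : M => mul u y) := by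
    intro y
    apply Finite.injective_iff_surjective.mpr
    intro t; exact Rsurj y t
  -- C3e : g_y has right inverse F(w,y) = (we)(ye)
  have C3e : ∀ w y : M, mul (mul e (mul (mul w e) (mul y e))) y = w := by
    intro w y
    obtain ⟨x, hx⟩ := gsurj y w
    have hx : mul (mul e x) y = w := hx
    rw [← hx, h x y e]
  -- E11' : L(x * (z*(yz))) = (Lx)*y
  have E11' : ∀ x y z : M, mul e (mul x (mul z (mul y z))) = mul (mul e x) y := by
    intro x y z
    obtain ⟨x', hx'⟩ := Lsurj (mul (mul e x) y)
    have hx' : mul e x' = mul (mul e x) y := hx'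
    have h1 := h x' z (mul y z)
    rw [hx'] at h1
    rw [h x y z] at h1
    rw [h1, hx']
  -- I16 : z*(yz) is independent of z
  have I16 : ∀ y z : M, mul z (mul y z) = mul e (mul y e) := by
    intro y z
    have key := (E11' e y z).trans (E11' e y e).symm
    exact Linj (Linj key)
  -- I21
  have I21 : ∀ w y : M, mul e (mul (mul (mul w e) (mul y e)) (mul e (mul y e))) = w := by
    intro w y
    have e11 := E11' (mul (mul w e) (mul y e)) y e
    rw [e11]
    exact C3e w y
  -- all squares are equal
  have Ssq : ∀ u : M, mul u u = mul e e := by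
    obtain ⟨w₀, hw₀⟩ := Rsurj e e
    have key : ∀ u : M, mul e (mul u u) = w₀ := by
      intro u
      obtain ⟨v, hv⟩ := Lsurj u
      have hv : mul e v = u := hv
      obtain ⟨y, hy⟩ := Rsurj e v
      have i := I21 w₀ y
      rw [hw₀, hy, hv] at i
      exact i
    intro u
    exact Linj ((key u).trans (key e).symm)
  -- E23 : y * (ee) = e * (ye)
  have E23 : ∀ y : M, mul y (mul e e) = mul e (mul y e) := by
    intro y
    have h1 := I16 y y
    rwa [Ssq y] at h1
  -- E24 : L R_e (((Lx)y)y) = x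
  have E24 : ∀ x y : M, mul e (mul (mul (mul (mul e x) y) y) e) = x := by
    intro x y
    have h1 := h x y y
    rw [Ssq y] at h1
    rw [E23 (mul (mul (mul e x) y) y)] at h1
    exact h1
  -- E26 : (uy)y independent of y
  have E26 : ∀ u y y' : M, mul (mul u y) y = mul (mul u y') y' := by
    intro u y y'
    obtain ⟨x, hx⟩ := Lsurj u
    have hx : mul e x = u := hx
    have a1 := E24 x y
    have a2 := E24 x y'
    rw [hx] at a1 a2
    exact Rinj e (Linj (a1.trans a2.symm))
  -- E29 : x(yz) = R_e^2 (((Lx)y)z)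
  have E29 : ∀ x y z : M, mul x (mul y z) = mul (mul (mul (mul (mul e x) y) z) e) e := by
    intro x y z
    have h1 := E26 (mul (mul (mul e x) y) z) (mul y z) e
    rw [h x y z] at h1
    exact h1
  -- E28 : (ee)y = (ye)e
  have E28 : ∀ y : M, mul (mul e e) y = mul (mul y e) e := by
    intro y
    have h1 := E26 y y e
    rwa [Ssq y] at h1
  -- E31 : L R_e = R_e^5
  have E31 : ∀ y : M, mul e (mul y e) = mul (mul (mul (mul (mul y e) e) e) e) e := by
    intro y
    have h1 := E29 e y e
    rwa [E28 y] at h1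
  -- E32 : L R_e = R_e^4 L
  have E32 : ∀ x : M, mul e (mul x e) = mul (mul (mul (mul (mul e x) e) e) e) e := by
    intro x
    have h1 := E29 x e e
    rwa [E23 x] at h1
  -- L = R_e
  have LeqR : ∀ x : M, mul e x = mul x e := by
    intro x
    have h1 := (E32 x).symm.trans (E31 x)
    exact Rinj e (Rinj e (Rinj e (Rinj e h1)))
  -- R_e^5 = id
  have R5 : ∀ x : M, mul (mul (mul (mul (mul x e) e) e) e) e = x := by
    intro x
    have h1 := E24 x e
    rw [LeqR x] at h1
    rw [LeqR (mul (mul (mul (mul x e) e) e) e)] at h1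
    exact h1
  -- R_e^2 = id
  have R2 : ∀ x : M, mul (mul x e) e = x := by
    intro x
    have h1 := E31 x
    rw [R5 x] at h1
    rw [LeqR (mul x e)] at h1
    exact h1
  -- R_e = id
  have Rid : ∀ x : M, mul x e = x := by
    intro x
    have h1 := R5 x
    rw [R2 x, R2 x] at h1
    exact h1
  -- L = id
  have Lid : ∀ x : M, mul e x = x := fun x => (LeqR x).trans (Rid x)
  have Sq : ∀ x : M, mul x x = e := by
    intro x
    rw [Ssq x, Lid e]
  have K2 : ∀ u y : M, mul (mul u y) y = u := by
    intro u y
    rw [E26 u y e, Rid, Rid]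
  have K1 : ∀ y z : M, mul z (mul y z) = y := by
    intro y z
    rw [I16 y z, Rid y, Lid y]
  have comm : ∀ a b : M, mul a b = mul b a := by
    intro a b
    obtain ⟨x, hx⟩ := Rsurj b a
    rw [← hx, K2 x b, K1 x b]
  have assoc : ∀ x y z : M, mul (mul x y) z = mul x (mul y z) := by
    intro x y z
    have h1 := E29 x y z
    rw [Lid x] at h1
    rw [Rid (mul (mul x y) z), Rid (mul (mul x y) z)] at h1
    exact h1.symm
  exact ⟨assoc, comm, Lid, Sq⟩
end

section
/- Let M be a FINITE type equipped with a binary operation · and a distinguished element e, and suppose that (((e·x)·(y·z))·z)·y = x holds for all x, y, z ∈ M (formula 81R1). Then (M, ·) is a Boolean group with identity element e: the operation · is associative and commutative, e·x = x for all x, and x·x = e for all x. -/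
/-!
Left translation by `e` is injective and every right translation is surjective, so on a finite
carrier all of them are permutations, and 81R1 becomes the identity `ρ y ρ z ρ (y z) φ = 1`
between the right translations `ρ` and the left translation `φ` by `e`. Evaluating it at `e`
(where `ρ a e = φ a`) shows that `β := ρ z φ ρ z` does not depend on `z`, that
`ρ (y z) = (ρ z)⁻¹ β⁻¹ ρ y` and that `β² = φ`; feeding 81R1 back into this twisted
anti-homomorphism shows that all squares `(ρ u)²` agree. For `r := ρ (e e)` this leaves
`r³ φ = 1` and `(r φ r)² = φ`, which force `r = φ = β = 1`. Then every `ρ z` is an involution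
and `ρ` an injective anti-homomorphism, which is the Boolean group structure.
-/

open Equiv Function

section Translations

variable {M : Type*} {mul : M → M → M} {e : M}

theorem injective_mul_left_of_81R1
    (h : ∀ x y z, mul (mul (mul (mul e x) (mul y z)) z) y = x) : Injective (mul e) :=
  fun a b hab => by rw [← h a e e, hab, h b e e]

theorem surjective_mul_right_of_81R1
    (h : ∀ x y z, mul (mul (mul (mul e x) (mul y z)) z) y = x) (a : M) :
    Surjective (fun t => mul t a) :=
  fun x => ⟨_, h x a e⟩

end Translations

theorem eq_one_of_cube_mul_eq_one_of_sq_conj_eq {G : Type*} [Group G] {r φ : G}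
    (h₁ : r * r * r * φ = 1) (h₂ : r * φ * r * (r * φ * r) = φ) : r = 1 := by
  have hφ : φ = (r * r * r)⁻¹ := eq_inv_of_mul_eq_one_right h₁
  have hr : r⁻¹ = (r * φ * r * (r * φ * r))⁻¹ * φ := by rw [hφ]; group
  rw [h₂, inv_mul_cancel] at hr
  exact inv_eq_one.mp hr

structure IsRegularPerms81R1 {M : Type*} (mul : M → M → M) (e : M) (ρ : M → Perm M)
    (φ : Perm M) : Prop where
  rho_apply : ∀ a t, ρ a t = mul t a
  phi_apply : ∀ t, φ t = mul e t
  law : ∀ x y z, mul (mul (mul (mul e x) (mul y z)) z) y = x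

namespace IsRegularPerms81R1

variable {M : Type*} {mul : M → M → M} {e : M} {ρ : M → Perm M} {φ : Perm M}

theorem rho_apply_self (H : IsRegularPerms81R1 mul e ρ φ) (a : M) : ρ a e = φ a := by
  rw [H.rho_apply, H.phi_apply]

theorem rel (H : IsRegularPerms81R1 mul e ρ φ) (y z : M) :
    ρ y * ρ z * ρ (mul y z) * φ = 1 := by
  ext x
  simp only [Perm.mul_apply, Perm.one_apply, H.rho_apply, H.phi_apply, H.law]

theorem conj_eq (H : IsRegularPerms81R1 mul e ρ φ) (y z : M) :
    ρ y * φ * ρ y = ρ z * φ * ρ z := by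
  have key : ∀ w x, (ρ w * φ * ρ w) x = ((ρ x)⁻¹ * φ⁻¹) e := by
    intro w x
    have hrel : ρ w * ρ (mul x w) = (ρ x)⁻¹ * φ⁻¹ := by
      calc ρ w * ρ (mul x w) = (ρ x)⁻¹ * (ρ x * ρ w * ρ (mul x w) * φ) * φ⁻¹ := by group
        _ = (ρ x)⁻¹ * φ⁻¹ := by rw [H.rel]; group
    rw [← hrel, Perm.mul_apply, Perm.mul_apply, Perm.mul_apply, H.rho_apply w x,
      ← H.rho_apply_self]
  ext x
  rw [key, key]

theorem rho_mul (H : IsRegularPerms81R1 mul e ρ φ) (y z : M) :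
    ρ (mul y z) = (ρ z)⁻¹ * (ρ e * φ * ρ e)⁻¹ * ρ y := by
  rw [← H.conj_eq y e]
  calc ρ (mul y z) = (ρ z)⁻¹ * (ρ y)⁻¹ * (ρ y * ρ z * ρ (mul y z) * φ) * φ⁻¹ := by group
    _ = (ρ z)⁻¹ * (ρ y * φ * ρ y)⁻¹ * ρ y := by rw [H.rel]; group

theorem rho_rho_apply (H : IsRegularPerms81R1 mul e ρ φ) (a t : M) :
    ρ (ρ a t) = (ρ a)⁻¹ * (ρ e * φ * ρ e)⁻¹ * ρ t := by
  rw [H.rho_apply]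
  exact H.rho_mul t a

theorem conj_mul_conj (H : IsRegularPerms81R1 mul e ρ φ) :
    ρ e * φ * ρ e * (ρ e * φ * ρ e) = φ := by
  have hφρ : φ * ρ e = (ρ e)⁻¹ * (ρ e * φ * ρ e)⁻¹ * φ := by
    ext y
    rw [Perm.mul_apply, ← H.rho_apply_self, H.rho_rho_apply, Perm.mul_apply,
      H.rho_apply_self]
    rfl
  calc ρ e * φ * ρ e * (ρ e * φ * ρ e) = ρ e * φ * ρ e * ρ e * (φ * ρ e) := by group
    _ = φ := by rw [hφρ]; group

theorem rho_mul_self_eq (H : IsRegularPerms81R1 mul e ρ φ) (u v : M) :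
    ρ u * ρ u = ρ v * ρ v := by
  set β := ρ e * φ * ρ e
  set K := (ρ e)⁻¹ * β⁻¹ * (ρ e)⁻¹ * β⁻¹ * (ρ (mul e e))⁻¹ * β⁻¹
  have hφ : ∀ x, ρ (φ x) = (ρ x)⁻¹ * β⁻¹ * ρ e := fun x => by
    rw [H.phi_apply]
    exact H.rho_mul e x
  have hK : ∀ x, ρ x = K * ρ (φ x) := fun x => by
    have hx : ρ e (ρ e (ρ (mul e e) (φ x))) = x := by
      simpa only [Perm.mul_apply, Perm.one_apply] using Perm.ext_iff.mp (H.rel e e) x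
    conv_lhs => rw [← hx, H.rho_rho_apply, H.rho_rho_apply, H.rho_rho_apply]
    simp only [K, β]
    group
  have key : ∀ x, ρ (φ x) * ρ (φ x) = K⁻¹ * β⁻¹ * ρ e := fun x => by
    calc ρ (φ x) * ρ (φ x) = ρ (φ x) * ((ρ x)⁻¹ * β⁻¹ * ρ e) := by rw [← hφ]
      _ = ρ (φ x) * ((K * ρ (φ x))⁻¹ * β⁻¹ * ρ e) := by rw [← hK]
      _ = K⁻¹ * β⁻¹ * ρ e := by group
  obtain ⟨x, rfl⟩ := φ.surjective u
  obtain ⟨y, rfl⟩ := φ.surjective v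
  rw [key, key]

theorem conj_eq_one_and_phi_eq_one (H : IsRegularPerms81R1 mul e ρ φ) :
    ρ e * φ * ρ e = 1 ∧ φ = 1 := by
  rw [H.conj_eq e (mul e e)]
  set r := ρ (mul e e)
  have h₁ : r * r * r * φ = 1 := by
    rw [← H.rho_mul_self_eq e]
    exact H.rel e e
  have h₂ : r * φ * r * (r * φ * r) = φ := by
    rw [← H.conj_eq e]
    exact H.conj_mul_conj
  have hr : r = 1 := eq_one_of_cube_mul_eq_one_of_sq_conj_eq h₁ h₂
  have hφ : φ = 1 := by simpa only [hr, one_mul] using h₁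
  exact ⟨by rw [hr, hφ, one_mul, one_mul], hφ⟩

theorem isBooleanGroup (H : IsRegularPerms81R1 mul e ρ φ) :
    (∀ x y z : M, mul (mul x y) z = mul x (mul y z)) ∧
    (∀ x y : M, mul x y = mul y x) ∧
    (∀ x : M, mul e x = x) ∧
    (∀ x : M, mul x x = e) := by
  obtain ⟨hβ, hφ⟩ := H.conj_eq_one_and_phi_eq_one
  have hinv : ∀ z, (ρ z)⁻¹ = ρ z := fun z => by
    refine inv_eq_of_mul_eq_one_right ?_
    rw [← hβ, H.conj_eq e z, hφ, mul_one]
  have hρ_mul : ∀ y z, ρ (mul y z) = ρ z * ρ y := fun y z => by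
    rw [H.rho_mul, hβ, inv_one, mul_one, hinv]
  have hmul_e : ∀ x, mul e x = x := fun x => by rw [← H.phi_apply, hφ, Perm.one_apply]
  have hρ_inj : Injective ρ := fun a b hab => by
    rw [← hmul_e a, ← hmul_e b, ← H.rho_apply, ← H.rho_apply, hab]
  refine ⟨fun x y z => ?_, fun y z => hρ_inj ?_, hmul_e, fun x => ?_⟩
  · rw [← H.rho_apply, ← H.rho_apply, ← H.rho_apply, hρ_mul, Perm.mul_apply]
  · rw [← hinv (mul y z), hρ_mul, hρ_mul, mul_inv_rev, hinv, hinv]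
  · rw [← hmul_e (mul x x), ← H.rho_apply, hρ_mul,
      mul_eq_one_iff_eq_inv.mpr (hinv x).symm, Perm.one_apply]

end IsRegularPerms81R1

theorem finite_single_axiom_81R1
    (M : Type) [Finite M] (mul : M → M → M) (e : M)
    (h : ∀ x y z : M, mul (mul (mul (mul e x) (mul y z)) z) y = x) :
    (∀ x y z : M, mul (mul x y) z = mul x (mul y z)) ∧
    (∀ x y : M, mul x y = mul y x) ∧
    (∀ x : M, mul e x = x) ∧
    (∀ x : M, mul x x = e) := by
  have hφ : Bijective (mul e) := by
    have hinj := injective_mul_left_of_81R1 h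
    exact ⟨hinj, Finite.injective_iff_surjective.mp hinj⟩
  have hρ : ∀ a, Bijective (fun t => mul t a) := fun a => by
    have hsurj := surjective_mul_right_of_81R1 h a
    exact ⟨Finite.injective_iff_surjective.mpr hsurj, hsurj⟩
  exact IsRegularPerms81R1.isBooleanGroup (ρ := fun a => Equiv.ofBijective _ (hρ a))
    (φ := Equiv.ofBijective _ hφ) ⟨fun _ _ => rfl, fun _ => rfl, h⟩
end
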